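/- arXiv:2309.02720 — 10 statements merged into one kernel-verified Lean document; each statement's English description precedes it below -/
import Mathlib

section
/- The function ψ̃ satisfies the modified J-equation ODE with the correct boundary values: P[ψ̃](τ) = 0 for every τ > 0, ψ̃(1) = 1, and ψ̃(b) = a. -/
/-- The function `ψ̃` satisfies the modified `J`-equation ODE
`P[ψ̃](τ) = ψ̃''(τ) + (n-1)ψ̃'(τ)/τ - (n-1)ψ̃(τ)/τ² - k = 0` for every `τ > 0`,
with boundary values `ψ̃(1) = 1` and `ψ̃(b) = a`. -/
theorem modified_J_ODE_solution
    (n : ℕ) (hn : 2 ≤ n) (a b k : ℝ) (ha : 1 < a) (hb : 1 < b) (hk : 0 ≤ k)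
    (c ck : ℝ)
    (hc : c = n * (a * b ^ (n - 1) - 1) / (b ^ n - 1))
    (hck : ck = c - (n * k / (n + 1)) * (b ^ (n + 1) - 1) / (b ^ n - 1))
    (ψ : ℝ → ℝ)
    (hψ : ψ = fun τ => k * τ ^ 2 / (n + 1) + (ck / n) * τ +
      (((n : ℝ) + 1 - k) / (n + 1) - ck / n) / τ ^ (n - 1)) :
    (∀ τ > (0 : ℝ),
      deriv (deriv ψ) τ + ((n : ℝ) - 1) * deriv ψ τ / τ
        - ((n : ℝ) - 1) * ψ τ / τ ^ 2 - k = 0)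
    ∧ ψ 1 = 1 ∧ ψ b = a := by
  obtain ⟨p, rfl⟩ : ∃ p, n = p + 2 := ⟨n - 2, by omega⟩
  subst hψ
  have hb0 : (0:ℝ) < b := lt_trans one_pos hb
  have hN0 : ((p + 2 : ℕ) : ℝ) ≠ 0 := by positivity
  have hN1 : ((p + 2 : ℕ) : ℝ) + 1 ≠ 0 := by positivity
  set C : ℝ := (((p + 2 : ℕ) : ℝ) + 1 - k) / (((p + 2 : ℕ) : ℝ) + 1) - ck / ((p + 2 : ℕ) : ℝ)
    with hC
  set g : ℝ → ℝ := fun x => k * (2 * x) / (((p + 2 : ℕ) : ℝ) + 1) + ck / ((p + 2 : ℕ) : ℝ)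
      - C * (((p:ℝ) + 1) * x ^ p) / (x ^ (p + 1)) ^ 2 with hg
  set h : ℝ → ℝ := fun x => k * 2 / (((p + 2 : ℕ) : ℝ) + 1)
      + C * (((p:ℝ) + 1) * ((p:ℝ) + 2)) / x ^ (p + 3) with hh
  have hpsi : ∀ x : ℝ, x ≠ 0 → HasDerivAt
      (fun τ : ℝ => k * τ ^ 2 / (((p + 2 : ℕ) : ℝ) + 1) + (ck / ((p + 2 : ℕ) : ℝ)) * τ +
        C / τ ^ (p + 2 - 1)) (g x) x := by
    intro x hx
    have h1 : HasDerivAt (fun τ : ℝ => k * τ ^ 2 / (((p + 2 : ℕ) : ℝ) + 1))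
        (k * (2 * x ^ 1) / (((p + 2 : ℕ) : ℝ) + 1)) x :=
      (((hasDerivAt_pow 2 x).const_mul k).div_const _)
    have h2 : HasDerivAt (fun τ : ℝ => (ck / ((p + 2 : ℕ) : ℝ)) * τ)
        (ck / ((p + 2 : ℕ) : ℝ)) x := by
      simpa using (hasDerivAt_id x).const_mul (ck / ((p + 2 : ℕ) : ℝ))
    have h3 : HasDerivAt (fun τ : ℝ => C / τ ^ (p + 1))
        (C * (-(((p:ℝ) + 1) * x ^ p) / (x ^ (p + 1)) ^ 2)) x := by
      have := ((hasDerivAt_pow (p + 1) x).inv (pow_ne_zero _ hx)).const_mul C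
      simpa [div_eq_mul_inv, Nat.add_sub_cancel] using this
    have := (h1.add h2).add h3
    convert this using 1
    · rfl
    · rfl
    · rfl
    simp [hg]
    ring
  have hgd : ∀ x : ℝ, x ≠ 0 → HasDerivAt g (h x) x := by
    intro x hx
    have h1 : HasDerivAt (fun τ : ℝ => k * (2 * τ) / (((p + 2 : ℕ) : ℝ) + 1) + ck / ((p + 2 : ℕ) : ℝ))
        (k * 2 / (((p + 2 : ℕ) : ℝ) + 1)) x := by
      have : HasDerivAt (fun τ : ℝ => k * (2 * τ) / (((p + 2 : ℕ) : ℝ) + 1))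
          (k * 2 / (((p + 2 : ℕ) : ℝ) + 1)) x := by
        simpa [mul_assoc] using (((hasDerivAt_id x).const_mul (k * 2)).div_const
          (((p + 2 : ℕ) : ℝ) + 1))
      simpa using this.add_const (ck / ((p + 2 : ℕ) : ℝ))
    have h3 : HasDerivAt (fun τ : ℝ => C * (((p:ℝ) + 1) / τ ^ (p + 2)))
        (C * (((p:ℝ) + 1) * (-(((p:ℝ) + 2) * x ^ (p + 1)) / (x ^ (p + 2)) ^ 2))) x := by
      have := (((hasDerivAt_pow (p + 2) x).inv (pow_ne_zero _ hx)).const_mul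
        ((p:ℝ) + 1)).const_mul C
      simpa [div_eq_mul_inv, Nat.add_sub_cancel, mul_assoc] using this
    have heq : g = fun τ : ℝ => (k * (2 * τ) / (((p + 2 : ℕ) : ℝ) + 1) + ck / ((p + 2 : ℕ) : ℝ))
        - C * (((p:ℝ) + 1) / τ ^ (p + 2)) := by
      funext τ
      simp only [hg]
      by_cases hτ : τ = 0
      · simp [hτ]
      · field_simp
        ring
    rw [heq]
    convert h1.sub h3 using 1
    · rfl
    · rfl
    · rfl
    have hx3 : x ^ (p + 3) ≠ 0 := pow_ne_zero _ hx
    simp only [hh]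
    field_simp
    ring
  refine ⟨?_, ?_, ?_⟩
  · intro τ hτ
    have hτ0 : τ ≠ 0 := ne_of_gt hτ
    have hd1 : deriv (fun τ : ℝ => k * τ ^ 2 / (((p + 2 : ℕ) : ℝ) + 1) + (ck / ((p + 2 : ℕ) : ℝ)) * τ +
        C / τ ^ (p + 2 - 1)) τ = g τ := (hpsi τ hτ0).deriv
    have hev : deriv (fun τ : ℝ => k * τ ^ 2 / (((p + 2 : ℕ) : ℝ) + 1) + (ck / ((p + 2 : ℕ) : ℝ)) * τ +
        C / τ ^ (p + 2 - 1)) =ᶠ[nhds τ] g := by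
      filter_upwards [eventually_ne_nhds hτ0] with x hx
      exact (hpsi x hx).deriv
    have hd2 : deriv (deriv (fun τ : ℝ => k * τ ^ 2 / (((p + 2 : ℕ) : ℝ) + 1) +
        (ck / ((p + 2 : ℕ) : ℝ)) * τ + C / τ ^ (p + 2 - 1))) τ = h τ := by
      rw [hev.deriv_eq]
      exact (hgd τ hτ0).deriv
    rw [hd1, hd2]
    have hτp : τ ^ (p + 1) ≠ 0 := pow_ne_zero _ hτ0
    have hτp3 : τ ^ (p + 3) ≠ 0 := pow_ne_zero _ hτ0
    simp only [hg, hh, Nat.add_sub_cancel]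
    push_cast
    field_simp
    ring
  · simp only [hC]
    push_cast
    field_simp
    ring
  · have hbn : b ^ (p + 2) - 1 ≠ 0 :=
      sub_ne_zero.mpr (ne_of_gt (one_lt_pow₀ hb (by omega)))
    have hbp : b ^ (p + 1) ≠ 0 := pow_ne_zero _ (ne_of_gt hb0)
    subst hck hc
    simp only [hC, Nat.add_sub_cancel]
    push_cast
    field_simp
    ring
end

section
/- If c_k + k > n−1, then ψ̃'(τ) > 0 for every τ ≥ 1; in particular ψ̃ is strictly increasing on [1,b] and maps [1,b] bijectively onto [1,a]. -/
/-- If `c_k + k > n−1`, then `ψ̃'(τ) > 0` for every `τ ≥ 1`; in particular `ψ̃`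
is strictly increasing on `[1,b]` and maps `[1,b]` bijectively onto `[1,a]`. -/
theorem modified_J_ODE_solution_increasing
    (n : ℕ) (hn : 2 ≤ n) (a b k : ℝ) (ha : 1 < a) (hb : 1 < b) (hk : 0 ≤ k)
    (c ck : ℝ)
    (hc : c = n * (a * b ^ (n - 1) - 1) / (b ^ n - 1))
    (hck : ck = c - (n * k / (n + 1)) * (b ^ (n + 1) - 1) / (b ^ n - 1))
    (ψt : ℝ → ℝ)
    (hψt : ψt = fun τ => k * τ ^ 2 / (n + 1) + (ck / n) * τ +
      (((n : ℝ) + 1 - k) / (n + 1) - ck / n) / τ ^ (n - 1))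
    (hstable : ck + k > (n : ℝ) - 1) :
    (∀ τ : ℝ, 1 ≤ τ → 0 < deriv ψt τ)
    ∧ StrictMonoOn ψt (Set.Icc 1 b)
    ∧ Set.BijOn ψt (Set.Icc 1 b) (Set.Icc 1 a) := by
  obtain ⟨m, rfl⟩ : ∃ m, n = m + 2 := ⟨n - 2, by omega⟩
  clear hn
  have hb0 : (0:ℝ) < b := by linarith
  set A : ℝ := ((m:ℝ)+3-k)/((m:ℝ)+3) - ck/((m:ℝ)+2) with hA
  have hψt' : ψt = fun τ => k * τ ^ 2 / ((m:ℝ)+3) + (ck / ((m:ℝ)+2)) * τ +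
      A / τ ^ (m + 1) := by
    rw [hψt, hA]; funext τ; push_cast; ring_nf
  -- derivative formula
  have key : ∀ τ : ℝ, τ ≠ 0 →
      HasDerivAt ψt (2*k*τ/((m:ℝ)+3) + ck/((m:ℝ)+2) - ((m:ℝ)+1)*A/τ^(m+2)) τ := by
    intro τ hτ
    rw [hψt']
    have h1 : HasDerivAt (fun τ : ℝ => k * τ ^ 2 / ((m:ℝ)+3)) (2*k*τ/((m:ℝ)+3)) τ := by
      have h := ((hasDerivAt_pow 2 τ).const_mul k).div_const ((m:ℝ)+3)
      refine h.congr_deriv ?_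
      push_cast; ring
    have h2 : HasDerivAt (fun τ : ℝ => (ck / ((m:ℝ)+2)) * τ) (ck/((m:ℝ)+2)) τ :=
      (hasDerivAt_id τ).const_mul _ |>.congr_deriv (by ring)
    have h3 : HasDerivAt (fun τ : ℝ => A / τ ^ (m+1)) (-(((m:ℝ)+1)*A/τ^(m+2))) τ := by
      have hp := (hasDerivAt_pow (m+1) τ).inv (pow_ne_zero _ hτ)
      have h := hp.const_mul A
      have heq : (fun y : ℝ => A * (fun x : ℝ => x ^ (m+1))⁻¹ y) = fun τ : ℝ => A / τ ^ (m+1) := by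
        ext x; rw [Pi.inv_apply, div_eq_mul_inv]
      rw [heq] at h
      refine h.congr_deriv ?_
      have hpow : (τ ^ (m+1))^2 = τ^m * τ^(m+2) := by
        rw [← pow_mul, ← pow_add]; ring_nf
      rw [Nat.add_sub_cancel]
      field_simp
      rw [hpow]; push_cast; ring
    have := (h1.add h2).add h3
    exact this.congr_deriv (by ring)
  -- positivity of the derivative
  have pos : ∀ τ : ℝ, 1 ≤ τ →
      0 < 2*k*τ/((m:ℝ)+3) + ck/((m:ℝ)+2) - ((m:ℝ)+1)*A/τ^(m+2) := by
    intro τ hτ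
    have hτ0 : (0:ℝ) < τ := by linarith
    have hτn : (1:ℝ) ≤ τ^(m+2) := one_le_pow₀ hτ
    have hτnpos : (0:ℝ) < τ^(m+2) := by positivity
    have hm3 : (0:ℝ) < (m:ℝ)+3 := by positivity
    have hm2 : (0:ℝ) < (m:ℝ)+2 := by positivity
    have hident : 2*k/((m:ℝ)+3) + ck/((m:ℝ)+2) - ((m:ℝ)+1)*A = ck + k - ((m:ℝ)+1) := by
      rw [hA]; field_simp; ring
    have hst : 0 < ck + k - ((m:ℝ)+1) := by push_cast at hstable; linarith
    have h2 : 2*k/((m:ℝ)+3) ≤ 2*k*τ/((m:ℝ)+3) :=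
      (div_le_div_iff_of_pos_right hm3).2 (by nlinarith)
    rcases le_or_gt 0 A with hA0 | hA0
    · have h1 : ((m:ℝ)+1)*A/τ^(m+2) ≤ ((m:ℝ)+1)*A :=
        div_le_self (by positivity) hτn
      linarith
    · have hterm : ((m:ℝ)+1)*A/τ^(m+2) < 0 :=
        div_neg_of_neg_of_pos (by nlinarith) hτnpos
      have hck' : ((m:ℝ)+3-k)/((m:ℝ)+3) < ck/((m:ℝ)+2) := by
        rw [hA] at hA0; linarith
      have hsum : 0 < 2*k/((m:ℝ)+3) + ((m:ℝ)+3-k)/((m:ℝ)+3) := by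
        rw [← add_div]
        apply div_pos (by linarith) hm3
      linarith
  have hderiv : ∀ τ : ℝ, 1 ≤ τ → 0 < deriv ψt τ := by
    intro τ hτ
    rw [(key τ (by linarith)).deriv]
    exact pos τ hτ
  have hcont : ContinuousOn ψt (Set.Icc 1 b) := fun x hx =>
    ((key x (by have := hx.1; intro h; rw [h] at this; linarith)).continuousAt).continuousWithinAt
  have hmono : StrictMonoOn ψt (Set.Icc 1 b) := by
    apply strictMonoOn_of_deriv_pos (convex_Icc 1 b) hcont
    intro x hx
    rw [interior_Icc] at hx
    exact hderiv x hx.1.le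
  refine ⟨hderiv, hmono, ?_⟩
  -- endpoint values
  have hψ1 : ψt 1 = 1 := by
    rw [hψt', hA]
    have hm3 : ((m:ℝ)+3) ≠ 0 := by positivity
    have hm2 : ((m:ℝ)+2) ≠ 0 := by positivity
    field_simp
    ring
  have hbn1 : (1:ℝ) < b^(m+2) := one_lt_pow₀ hb (by omega)
  have hbn : b^(m+2) - 1 ≠ 0 := by linarith
  have hψb : ψt b = a := by
    rw [hψt', hA, hck, hc]
    have hm3 : ((m:ℝ)+3) ≠ 0 := by positivity
    have hm2 : ((m:ℝ)+2) ≠ 0 := by positivity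
    have hbne : b ≠ 0 := ne_of_gt hb0
    push_cast
    norm_num
    field_simp
    ring
  have hb1 : (1:ℝ) ≤ b := hb.le
  have hmapsto : Set.MapsTo ψt (Set.Icc 1 b) (Set.Icc 1 a) := by
    intro x hx
    have hmon := hmono.monotoneOn
    constructor
    · rw [← hψ1]
      exact hmon (Set.left_mem_Icc.2 hb1) hx hx.1
    · rw [← hψb]
      exact hmon hx (Set.right_mem_Icc.2 hb1) hx.2
  have hsurj : Set.SurjOn ψt (Set.Icc 1 b) (Set.Icc 1 a) := by
    have := intermediate_value_Icc hb1 hcont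
    rw [hψ1, hψb] at this
    exact this
  exact ⟨hmapsto, hmono.injOn, hsurj⟩
end

section
/- There exists a twice continuously differentiable function ψ: [1,b] → ℝ satisfying P[ψ](τ) = 0 on [1,b], ψ(1) = 1, ψ(b) = a, and ψ'(τ) > 0 for all τ ∈ [1,b], if and only if c_k + k > n−1. -/
private lemma hd_div_pow {n : ℕ} (hn : 1 ≤ n) {x : ℝ} (hx : x ≠ 0) :
    HasDerivAt (fun t : ℝ => t / t ^ n) ((1 - (n : ℝ)) / x ^ n) x := by
  have h1 : HasDerivAt (fun t : ℝ => t / t ^ n)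
      ((1 * x ^ n - x * ((n : ℝ) * x ^ (n - 1))) / (x ^ n) ^ 2) x :=
    (hasDerivAt_id x).div (hasDerivAt_pow n x) (pow_ne_zero n hx)
  convert h1 using 1
  have hp : x * x ^ (n - 1) = x ^ n := by
    rw [← pow_succ']; congr 1; omega
  have hxn : x ^ n ≠ 0 := pow_ne_zero n hx
  field_simp
  linear_combination ((n : ℝ)) * hp

private lemma hd_const_div_pow (n : ℕ) (c : ℝ) {x : ℝ} (hx : x ≠ 0) :
    HasDerivAt (fun t : ℝ => c / t ^ n) (-(n : ℝ) * c / x ^ (n + 1)) x := by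
  have h1 : HasDerivAt (fun t : ℝ => c / t ^ n)
      ((0 * x ^ n - c * ((n : ℝ) * x ^ (n - 1))) / (x ^ n) ^ 2) x :=
    (hasDerivAt_const x c).div (hasDerivAt_pow n x) (pow_ne_zero n hx)
  convert h1 using 1
  rcases Nat.eq_zero_or_pos n with h0 | h0
  · subst h0; simp
  have hp : x * x ^ (n - 1) = x ^ n := by
    rw [← pow_succ']; congr 1; omega
  have hxn : x ^ n ≠ 0 := pow_ne_zero n hx
  field_simp
  linear_combination ((n : ℝ) * c * x ^ n) * hp


set_option maxHeartbeats 1600000 in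
/-- There exists a `C²` function `ψ : [1,b] → ℝ` with `P[ψ] = 0` on `[1,b]`,
`ψ(1) = 1`, `ψ(b) = a`, and `ψ' > 0` on `[1,b]`, if and only if `c_k + k > n−1`. -/
theorem modified_J_equation_solvability
    (n : ℕ) (hn : 2 ≤ n) (a b k : ℝ) (ha : 1 < a) (hb : 1 < b) (hk : 0 ≤ k)
    (c ck : ℝ)
    (hc : c = n * (a * b ^ (n - 1) - 1) / (b ^ n - 1))
    (hck : ck = c - (n * k / (n + 1)) * (b ^ (n + 1) - 1) / (b ^ n - 1)) :
    (∃ ψ : ℝ → ℝ, ContDiffOn ℝ 2 ψ (Set.Icc 1 b)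
      ∧ (∀ τ ∈ Set.Icc (1 : ℝ) b,
          derivWithin (derivWithin ψ (Set.Icc 1 b)) (Set.Icc 1 b) τ
            + ((n : ℝ) - 1) * derivWithin ψ (Set.Icc 1 b) τ / τ
            - ((n : ℝ) - 1) * ψ τ / τ ^ 2 - k = 0)
      ∧ ψ 1 = 1 ∧ ψ b = a
      ∧ (∀ τ ∈ Set.Icc (1 : ℝ) b, 0 < derivWithin ψ (Set.Icc 1 b) τ))
    ↔ ck + k > (n : ℝ) - 1 := by
  constructor
  · intro hex
    obtain ⟨ψ, hC2, hODE, hv1, hvb, hpos⟩ := hex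
    have hb0 : (0 : ℝ) < b := lt_trans one_pos hb
    have hbne : b ≠ 0 := ne_of_gt hb0
    have hn0 : (0 : ℝ) < (n : ℝ) := by exact_mod_cast (by omega : 0 < n)
    have hnne : (n : ℝ) ≠ 0 := ne_of_gt hn0
    have hn1ne : (n : ℝ) + 1 ≠ 0 := by positivity
    have hB1 : (1 : ℝ) < b ^ n := one_lt_pow₀ hb (by omega)
    have hBne : b ^ n - 1 ≠ 0 := by linarith
    have hUD : UniqueDiffOn ℝ (Set.Icc (1 : ℝ) b) := uniqueDiffOn_Icc hb
    have hSpos : ∀ τ ∈ Set.Icc (1 : ℝ) b, (0 : ℝ) < τ := fun τ hτ => lt_of_lt_of_le one_pos hτ.1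
    have h1mem : (1 : ℝ) ∈ Set.Icc (1 : ℝ) b := Set.left_mem_Icc.mpr hb.le
    have hbmem : b ∈ Set.Icc (1 : ℝ) b := Set.right_mem_Icc.mpr hb.le
    have hdiff : DifferentiableOn ℝ ψ (Set.Icc 1 b) := hC2.differentiableOn (by norm_num)
    have h1 : ∀ τ ∈ Set.Icc (1 : ℝ) b,
        HasDerivWithinAt ψ (derivWithin ψ (Set.Icc 1 b) τ) (Set.Icc 1 b) τ :=
      fun τ hτ => (hdiff τ hτ).hasDerivWithinAt
    have hC1 : ContDiffOn ℝ 1 (derivWithin ψ (Set.Icc 1 b)) (Set.Icc 1 b) :=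
      hC2.derivWithin hUD (by norm_num)
    have hdiff1 : DifferentiableOn ℝ (derivWithin ψ (Set.Icc 1 b)) (Set.Icc 1 b) :=
      hC1.differentiableOn (by norm_num)
    have h2 : ∀ τ ∈ Set.Icc (1 : ℝ) b,
        HasDerivWithinAt (derivWithin ψ (Set.Icc 1 b))
          (derivWithin (derivWithin ψ (Set.Icc 1 b)) (Set.Icc 1 b) τ) (Set.Icc 1 b) τ :=
      fun τ hτ => (hdiff1 τ hτ).hasDerivWithinAt
    set ψ₁ := derivWithin ψ (Set.Icc 1 b) with hψ₁
    set ψ₂ := derivWithin ψ₁ (Set.Icc 1 b) with hψ₂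
    -- first integral H
    set H : ℝ → ℝ := fun τ => ψ₁ τ + ((n : ℝ) - 1) * (ψ τ / τ) - k * τ with hH
    have hHd : ∀ τ ∈ Set.Icc (1 : ℝ) b, HasDerivWithinAt H 0 (Set.Icc 1 b) τ := by
      intro τ hτ
      have hτ0 : (0 : ℝ) < τ := hSpos τ hτ
      have hτne : τ ≠ 0 := ne_of_gt hτ0
      have hd : HasDerivWithinAt H
          (ψ₂ τ + ((n : ℝ) - 1) * ((ψ₁ τ * τ - ψ τ * 1) / τ ^ 2) - k * 1) (Set.Icc 1 b) τ := by
        refine HasDerivWithinAt.sub (HasDerivWithinAt.add (h2 τ hτ) ?_) ?_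
        · exact (((h1 τ hτ).div (hasDerivWithinAt_id τ _) hτne)).const_mul _
        · exact ((hasDerivAt_id τ).const_mul k).hasDerivWithinAt
      have he : ψ₂ τ + ((n : ℝ) - 1) * ((ψ₁ τ * τ - ψ τ * 1) / τ ^ 2) - k * 1 = 0 := by
        have hO := hODE τ hτ
        have hr : ((n : ℝ) - 1) * ((ψ₁ τ * τ - ψ τ * 1) / τ ^ 2)
            = ((n : ℝ) - 1) * ψ₁ τ / τ - ((n : ℝ) - 1) * ψ τ / τ ^ 2 := by
          field_simp
        rw [hr]
        linarith [hO]
      rwa [he] at hd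
    have hHconst : H b = H 1 := by
      have hdf : DifferentiableOn ℝ H (Set.Icc 1 b) :=
        fun τ hτ => (hHd τ hτ).differentiableWithinAt
      have hdz : ∀ τ ∈ Set.Ico (1 : ℝ) b, derivWithin H (Set.Icc 1 b) τ = 0 := fun τ hτ =>
        (hHd τ (Set.Ico_subset_Icc_self hτ)).derivWithin (hUD τ (Set.Ico_subset_Icc_self hτ))
      exact constant_of_derivWithin_zero hdf hdz b hbmem
    -- first integral G
    set G : ℝ → ℝ := fun τ => τ ^ n * ψ₁ τ - τ ^ n * ψ τ / τ - k / ((n : ℝ) + 1) * τ ^ (n + 1)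
      with hG
    have hGd : ∀ τ ∈ Set.Icc (1 : ℝ) b, HasDerivWithinAt G 0 (Set.Icc 1 b) τ := by
      intro τ hτ
      have hτ0 : (0 : ℝ) < τ := hSpos τ hτ
      have hτne : τ ≠ 0 := ne_of_gt hτ0
      have hpw : HasDerivWithinAt (fun t : ℝ => t ^ n) ((n : ℝ) * τ ^ (n - 1)) (Set.Icc 1 b) τ :=
        (hasDerivAt_pow n τ).hasDerivWithinAt
      have hpw1 : HasDerivWithinAt (fun t : ℝ => t ^ (n + 1))
          (((n : ℝ) + 1) * τ ^ n) (Set.Icc 1 b) τ := by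
        have hh := hasDerivAt_pow (n + 1) τ
        simp only [Nat.add_sub_cancel] at hh
        push_cast at hh
        exact hh.hasDerivWithinAt
      have hd : HasDerivWithinAt G
          (((n : ℝ) * τ ^ (n - 1) * ψ₁ τ + τ ^ n * ψ₂ τ)
            - ((((n : ℝ) * τ ^ (n - 1) * ψ τ + τ ^ n * ψ₁ τ) * τ - τ ^ n * ψ τ * 1) / τ ^ 2)
            - k / ((n : ℝ) + 1) * (((n : ℝ) + 1) * τ ^ n)) (Set.Icc 1 b) τ := by
        refine HasDerivWithinAt.sub (HasDerivWithinAt.sub ?_ ?_) ?_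
        · exact hpw.mul (h2 τ hτ)
        · exact (hpw.mul (h1 τ hτ)).div (hasDerivWithinAt_id τ _) hτne
        · exact hpw1.const_mul _
      have he : (((n : ℝ) * τ ^ (n - 1) * ψ₁ τ + τ ^ n * ψ₂ τ)
            - ((((n : ℝ) * τ ^ (n - 1) * ψ τ + τ ^ n * ψ₁ τ) * τ - τ ^ n * ψ τ * 1) / τ ^ 2)
            - k / ((n : ℝ) + 1) * (((n : ℝ) + 1) * τ ^ n)) = 0 := by
        have hO := hODE τ hτ
        have hpw2 : τ ^ (n - 1) * τ = τ ^ n := by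
          rw [← pow_succ]; congr 1; omega
        have hts : τ ^ (n - 1) = τ ^ n / τ := by
          rw [eq_div_iff hτne]; exact hpw2
        rw [hts]
        have h3 : ψ₂ τ = k + ((n : ℝ) - 1) * ψ τ / τ ^ 2 - ((n : ℝ) - 1) * ψ₁ τ / τ := by
          linarith [hO]
        rw [h3]
        field_simp
        ring
      rwa [he] at hd
    have hGconst : G b = G 1 := by
      have hdf : DifferentiableOn ℝ G (Set.Icc 1 b) :=
        fun τ hτ => (hGd τ hτ).differentiableWithinAt
      have hdz : ∀ τ ∈ Set.Ico (1 : ℝ) b, derivWithin G (Set.Icc 1 b) τ = 0 := fun τ hτ =>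
        (hGd τ (Set.Ico_subset_Icc_self hτ)).derivWithin (hUD τ (Set.Ico_subset_Icc_self hτ))
      exact constant_of_derivWithin_zero hdf hdz b hbmem
    -- extract the two scalar equations
    have hp0 : 0 < ψ₁ 1 := hpos 1 h1mem
    obtain ⟨p, hpdef⟩ : ∃ p : ℝ, p = ψ₁ 1 := ⟨_, rfl⟩
    obtain ⟨q, hqdef⟩ : ∃ q : ℝ, q = ψ₁ b := ⟨_, rfl⟩
    have E1 : q + ((n : ℝ) - 1) * (a / b) - k * b = p + ((n : ℝ) - 1) - k := by
      have := hHconst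
      simp only [hH, hv1, hvb, hpdef, hqdef] at this ⊢
      rw [this]
      norm_num
    have E2 : b ^ n * q - b ^ n * a / b - k / ((n : ℝ) + 1) * b ^ (n + 1)
        = p - 1 - k / ((n : ℝ) + 1) := by
      have := hGconst
      simp only [hG, hv1, hvb, hpdef, hqdef] at this ⊢
      rw [this]
      norm_num
    -- final algebra
    have hbpow : b ^ (n - 1) = b ^ n / b := by
      rw [eq_div_iff hbne, ← pow_succ]; congr 1; omega
    rw [pow_succ] at E2
    have hq : q = p + ((n : ℝ) - 1) - k + k * b - ((n : ℝ) - 1) * (a / b) := by linarith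
    rw [hq] at E2
    field_simp at E2
    have hc2 : c * ((b ^ n - 1) * b) = (n : ℝ) * (a * b ^ n - b) := by
      rw [hc, hbpow]
      field_simp
    have hck2 : ck * ((b ^ n - 1) * ((n : ℝ) + 1))
        = c * ((b ^ n - 1) * ((n : ℝ) + 1)) - (n : ℝ) * k * (b ^ n * b - 1) := by
      rw [hck, pow_succ]
      field_simp
    have hz : (ck + k - ((n : ℝ) - 1) - p)
        * ((b ^ n - 1) * (((n : ℝ) + 1) * (((n : ℝ) + 1) * b))) = 0 := by
      linear_combination (b * ((n : ℝ) + 1)) * hck2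
        + (((n : ℝ) + 1) * ((n : ℝ) + 1)) * hc2 + (-((n : ℝ) + 1)) * E2
    have hne2 : (b ^ n - 1) * (((n : ℝ) + 1) * (((n : ℝ) + 1) * b)) ≠ 0 := by
      apply mul_ne_zero hBne
      positivity
    have hkey : ck + k - ((n : ℝ) - 1) - p = 0 :=
      (mul_eq_zero.mp hz).resolve_right hne2
    linarith [hp0, hpdef]
  · intro hgt
    have hb0 : (0 : ℝ) < b := lt_trans one_pos hb
    have hbne : b ≠ 0 := ne_of_gt hb0
    have hn1 : 1 ≤ n := by omega
    have hn0 : (0 : ℝ) < (n : ℝ) := by exact_mod_cast (by omega : 0 < n)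
    have hn2 : (2 : ℝ) ≤ (n : ℝ) := by exact_mod_cast hn
    have hnne : (n : ℝ) ≠ 0 := ne_of_gt hn0
    have hn1ne : (n : ℝ) + 1 ≠ 0 := by positivity
    have hB1 : (1 : ℝ) < b ^ n := one_lt_pow₀ hb (by omega)
    have hBne : b ^ n - 1 ≠ 0 := by linarith
    have hUD : UniqueDiffOn ℝ (Set.Icc (1 : ℝ) b) := uniqueDiffOn_Icc hb
    obtain ⟨p, hpdef⟩ : ∃ p : ℝ, p = ck + k - ((n : ℝ) - 1) := ⟨_, rfl⟩
    have hp0 : 0 < p := by rw [hpdef]; linarith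
    obtain ⟨κ, hκdef⟩ : ∃ κ : ℝ, κ = k / ((n : ℝ) + 1) := ⟨_, rfl⟩
    obtain ⟨m, hmdef⟩ : ∃ m : ℝ, m = p - 1 - κ := ⟨_, rfl⟩
    obtain ⟨β, hβ⟩ : ∃ β : ℝ, β = -m / n := ⟨_, rfl⟩
    obtain ⟨α, hα⟩ : ∃ α : ℝ, α = 1 - β - κ := ⟨_, rfl⟩
    obtain ⟨ψ, hψ⟩ : ∃ f : ℝ → ℝ, f = fun τ => α * τ + β * (τ / τ ^ n) + κ * τ ^ 2 := ⟨_, rfl⟩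
    obtain ⟨D, hDdef⟩ : ∃ f : ℝ → ℝ, f = fun τ => α + β * ((1 - (n : ℝ)) / τ ^ n) + κ * (2 * τ) :=
      ⟨_, rfl⟩
    obtain ⟨D₂, hD2def⟩ : ∃ f : ℝ → ℝ,
        f = fun τ => β * (-(n : ℝ) * (1 - (n : ℝ)) / τ ^ (n + 1)) + κ * 2 := ⟨_, rfl⟩
    have hSpos : ∀ τ ∈ Set.Icc (1 : ℝ) b, (0 : ℝ) < τ := fun τ hτ => lt_of_lt_of_le one_pos hτ.1
    have key : ∀ τ : ℝ, τ ≠ 0 → HasDerivAt ψ (D τ) τ := by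
      intro τ hτ
      rw [hψ]
      have h1 : HasDerivAt (fun t : ℝ => α * t + β * (t / t ^ n) + κ * t ^ 2)
          (α * 1 + β * ((1 - (n : ℝ)) / τ ^ n) + κ * (2 * τ)) τ := by
        refine HasDerivAt.add (HasDerivAt.add ?_ ?_) ?_
        · exact (hasDerivAt_id τ).const_mul α
        · exact (hd_div_pow hn1 hτ).const_mul β
        · have h2 : HasDerivAt (fun t : ℝ => t ^ 2) (2 * τ) τ := by
            simpa using hasDerivAt_pow 2 τ
          exact h2.const_mul _
      have he : D τ = α * 1 + β * ((1 - (n : ℝ)) / τ ^ n) + κ * (2 * τ) := by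
        simp only [hDdef]; ring
      rw [he]
      exact h1
    have key2 : ∀ τ : ℝ, τ ≠ 0 → HasDerivAt D (D₂ τ) τ := by
      intro τ hτ
      rw [hDdef]
      have h1 : HasDerivAt (fun t : ℝ => α + β * ((1 - (n : ℝ)) / t ^ n) + κ * (2 * t))
          (0 + β * (-(n : ℝ) * (1 - (n : ℝ)) / τ ^ (n + 1)) + κ * 2) τ := by
        refine HasDerivAt.add (HasDerivAt.add (hasDerivAt_const τ α) ?_) ?_
        · exact (hd_const_div_pow n (1 - (n : ℝ)) hτ).const_mul β
        · have h2 : HasDerivAt (fun t : ℝ => 2 * t) (2 : ℝ) τ := by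
            simpa using (hasDerivAt_id τ).const_mul (2 : ℝ)
          exact h2.const_mul _
      have he : D₂ τ = 0 + β * (-(n : ℝ) * (1 - (n : ℝ)) / τ ^ (n + 1)) + κ * 2 := by
        simp only [hD2def]; ring
      rw [he]
      exact h1
    have hD : ∀ τ ∈ Set.Icc (1 : ℝ) b, derivWithin ψ (Set.Icc 1 b) τ = D τ := fun τ hτ =>
      ((key τ (ne_of_gt (hSpos τ hτ))).hasDerivWithinAt).derivWithin (hUD τ hτ)
    refine ⟨ψ, ?_, ?_, ?_, ?_, ?_⟩
    · -- ContDiffOn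
      have hne : ∀ x ∈ Set.Icc (1 : ℝ) b, x ^ n ≠ 0 := fun x hx =>
        pow_ne_zero n (ne_of_gt (hSpos x hx))
      rw [hψ]
      exact ((contDiffOn_const.mul contDiffOn_id).add
        (contDiffOn_const.mul (contDiffOn_id.div (contDiffOn_id.pow n) hne))).add
        (contDiffOn_const.mul (contDiffOn_id.pow 2))
    · -- ODE
      intro τ hτ
      have hτ0 : (0 : ℝ) < τ := hSpos τ hτ
      have hτne : τ ≠ 0 := ne_of_gt hτ0
      have e1 : derivWithin (derivWithin ψ (Set.Icc 1 b)) (Set.Icc 1 b) τ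
          = derivWithin D (Set.Icc 1 b) τ := derivWithin_congr hD (hD τ hτ)
      have e2 : derivWithin D (Set.Icc 1 b) τ = D₂ τ :=
        ((key2 τ hτne).hasDerivWithinAt).derivWithin (hUD τ hτ)
      rw [e1, e2, hD τ hτ]
      simp only [hD2def, hDdef, hψ, hκdef]
      field_simp
      ring
    · -- ψ 1 = 1
      simp only [hψ]
      norm_num
      rw [hα]; ring
    · -- ψ b = a
      simp only [hψ, hα, hβ, hmdef, hκdef, hpdef, hck, hc]
      have hbpow : b ^ (n - 1) = b ^ n / b := by
        rw [eq_div_iff hbne, ← pow_succ]; congr 1; omega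
      rw [hbpow, pow_succ]
      field_simp
      ring
    · -- positivity
      intro τ hτ
      rw [hD τ hτ]
      have hτ1 : 1 ≤ τ := hτ.1
      have hτ0 : (0 : ℝ) < τ := hSpos τ hτ
      have ht1 : 1 ≤ τ ^ n := one_le_pow₀ hτ1
      have ht0 : (0 : ℝ) < τ ^ n := by positivity
      have hm : (n : ℝ) * β = -m := by
        rw [hβ]; field_simp
      have hA : (n : ℝ) * α = p + (n : ℝ) - 1 - k := by
        have h5 : (n : ℝ) * α = (n : ℝ) - (n : ℝ) * β - (n : ℝ) * κ := by rw [hα]; ring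
        rw [hm] at h5
        rw [h5, hmdef, hκdef]
        field_simp
        ring
      have hexp : (n : ℝ) * D τ = (p + (n : ℝ) - 1 - k) + ((n : ℝ) - 1) * (m / τ ^ n)
          + (n : ℝ) * κ * (2 * τ) := by
        have h5 : (n : ℝ) * D τ = (n : ℝ) * α + ((n : ℝ) * β) * ((1 - (n : ℝ)) / τ ^ n)
            + (n : ℝ) * κ * (2 * τ) := by simp only [hDdef]; ring
        rw [h5, hm, hA]
        ring
      have hκ : 0 ≤ κ := by rw [hκdef]; positivity
      have hkk : k = ((n : ℝ) + 1) * κ := by rw [hκdef]; field_simp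
      have hkk2 : k = (n : ℝ) * κ + κ := by rw [hkk]; ring
      have h6 : (n : ℝ) * κ * 2 ≤ (n : ℝ) * κ * (2 * τ) := by
        have := mul_le_mul_of_nonneg_left (by linarith : (2:ℝ) ≤ 2 * τ)
          (mul_nonneg hn0.le hκ)
        linarith [this]
      have h7 : κ ≤ (n : ℝ) * κ := le_mul_of_one_le_left hκ (by linarith)
      have hnD : 0 < (n : ℝ) * D τ := by
        rcases le_or_gt 0 m with hm0 | hm0
        · have h4 : 0 ≤ ((n : ℝ) - 1) * (m / τ ^ n) :=
            mul_nonneg (by linarith) (div_nonneg hm0 ht0.le)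
          linarith [hexp, h4, h6, h7, hkk2, hp0, hn2]
        · have hdiv : m ≤ m / τ ^ n := by
            rw [le_div_iff₀ ht0]
            have hpr : 0 ≤ (-m) * (τ ^ n - 1) :=
              mul_nonneg (by linarith) (by linarith)
            nlinarith [hpr]
          have h4 : ((n : ℝ) - 1) * m ≤ ((n : ℝ) - 1) * (m / τ ^ n) :=
            mul_le_mul_of_nonneg_left hdiv (by linarith)
          have h8 : ((n : ℝ) - 1) * m = ((n : ℝ) - 1) * p - ((n : ℝ) - 1)
              - ((n : ℝ) - 1) * κ := by rw [hmdef]; ring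
          have h9 : 0 ≤ ((n : ℝ) - 1) * p := mul_nonneg (by linarith) hp0.le
          have h10 : (n : ℝ) * κ = ((n : ℝ) - 1) * κ + κ := by ring
          linarith [hexp, h4, h6, h8, h9, h10, hkk2, hp0]
      rcases mul_pos_iff.mp hnD with ⟨_, h⟩ | ⟨h, _⟩
      · exact h
      · linarith
end

section
/- If 0 < c_k + k < n−1, then there exists a unique λ ∈ (1,b) such that C_k(λ) + k·λ = (n−1)/λ. -/
open Set

/-- Auxiliary polynomial function. -/
noncomputable def phiAux (α β γ δ : ℝ) (n : ℕ) (s : ℝ) : ℝ :=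
  α * s + β * s ^ 2 - s ^ n - γ * s ^ (n + 2) - δ

lemma phiAux_hasDerivAt (α β γ δ : ℝ) (n : ℕ) (s : ℝ) :
    HasDerivAt (phiAux α β γ δ n)
      (α + 2 * β * s - (n : ℝ) * s ^ (n - 1) - ((n : ℝ) + 2) * γ * s ^ (n + 1)) s := by
  have h : HasDerivAt (phiAux α β γ δ n)
      (α * 1 + β * ((2:ℕ) * s ^ (2 - 1)) - (n : ℝ) * s ^ (n - 1)
        - γ * ((n + 2 : ℕ) * s ^ (n + 2 - 1))) s :=
    (((((hasDerivAt_id s).const_mul α).add ((hasDerivAt_pow 2 s).const_mul β)).sub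
      (hasDerivAt_pow n s)).sub ((hasDerivAt_pow (n + 2) s).const_mul γ)).sub_const δ
  have he : n + 2 - 1 = n + 1 := rfl
  rw [he] at h
  convert h using 1
  push_cast
  ring

lemma phiAux_deriv_concave (α β γ : ℝ) (n : ℕ) (hβ : 0 ≤ β) (hγ : 0 ≤ γ) :
    ConcaveOn ℝ (Ici (0:ℝ))
      (fun s : ℝ => α + 2 * β * s - (n : ℝ) * s ^ (n - 1) - ((n : ℝ) + 2) * γ * s ^ (n + 1)) := by
  have c1 : ConcaveOn ℝ (Ici (0:ℝ)) (fun s : ℝ => α + 2 * β * s) := by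
    refine ⟨convex_Ici 0, ?_⟩
    intro x _ y _ p q hp hq hpq
    simp only [smul_eq_mul]
    apply le_of_eq
    linear_combination α * hpq
  have c2 : ConcaveOn ℝ (Ici (0:ℝ)) (-((n : ℝ) • fun s : ℝ => s ^ (n - 1))) :=
    (ConvexOn.smul (by positivity) (convexOn_pow (n - 1))).neg
  have c3 : ConcaveOn ℝ (Ici (0:ℝ)) (-((((n : ℝ) + 2) * γ) • fun s : ℝ => s ^ (n + 1))) :=
    (ConvexOn.smul (by positivity) (convexOn_pow (n + 1))).neg
  have h := (c1.add c2).add c3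
  have heq : (fun s : ℝ => α + 2 * β * s - (n : ℝ) * s ^ (n - 1)
      - ((n : ℝ) + 2) * γ * s ^ (n + 1))
      = ((fun s : ℝ => α + 2 * β * s) + -((n : ℝ) • fun s : ℝ => s ^ (n - 1)))
        + -((((n : ℝ) + 2) * γ) • fun s : ℝ => s ^ (n + 1)) := by
    funext s
    simp only [Pi.add_apply, Pi.neg_apply, Pi.smul_apply, smul_eq_mul]
    ring
  rw [heq]
  exact h

lemma phiAux_atMostOne (α β γ δ : ℝ) (n : ℕ) (b : ℝ)
    (hn : n ≠ 0) (hβ : 0 ≤ β) (hγ : 0 ≤ γ) (hδ : 0 < δ)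
    (hΦb : 0 < phiAux α β γ δ n b)
    (x y : ℝ) (hx0 : 0 < x) (hxy : x < y) (hyb : y < b)
    (hx : phiAux α β γ δ n x = 0) (hy : phiAux α β γ δ n y = 0) : False := by
  set Φ : ℝ → ℝ := phiAux α β γ δ n with hΦ
  set Φ' : ℝ → ℝ := fun s : ℝ =>
    α + 2 * β * s - (n : ℝ) * s ^ (n - 1) - ((n : ℝ) + 2) * γ * s ^ (n + 1) with hΦ'
  have hderiv : ∀ s : ℝ, HasDerivAt Φ (Φ' s) s := fun s => phiAux_hasDerivAt α β γ δ n s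
  have hdiff : Differentiable ℝ Φ := fun s => (hderiv s).differentiableAt
  have hcont : Continuous Φ := hdiff.continuous
  -- Rolle between the two roots
  obtain ⟨s1, hs1, hs1'⟩ := exists_hasDerivAt_eq_slope Φ Φ' hxy hcont.continuousOn
    (fun t _ => hderiv t)
  rw [hx, hy, sub_zero, zero_div] at hs1'
  -- mean value between y and b
  obtain ⟨s2, hs2, hs2'⟩ := exists_hasDerivAt_eq_slope Φ Φ' hyb hcont.continuousOn
    (fun t _ => hderiv t)
  have hs2pos : 0 < Φ' s2 := by
    rw [hs2', hy, sub_zero]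
    exact div_pos hΦb (by linarith [hs2.1, hs2.2])
  have hs1s2 : s1 < s2 := lt_trans hs1.2 hs2.1
  have conc := phiAux_deriv_concave α β γ n hβ hγ
  -- Φ' is negative on (0, s1)
  have hneg : ∀ t ∈ Ioo (0:ℝ) s1, Φ' t < 0 := by
    intro t ht
    have hts1 : t < s1 := ht.2
    have ht0 : 0 < t := ht.1
    set p : ℝ := (s2 - s1) / (s2 - t) with hp'
    set q : ℝ := (s1 - t) / (s2 - t) with hq'
    have hst : 0 < s2 - t := by linarith
    have hp : 0 < p := div_pos (by linarith) hst
    have hq : 0 < q := div_pos (by linarith) hst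
    have hpq : p + q = 1 := by
      rw [hp', hq']
      field_simp
      ring
    have hcomb : p • t + q • s2 = s1 := by
      simp only [smul_eq_mul, hp', hq']
      field_simp
      ring
    have hc := conc.2 (mem_Ici.2 ht0.le) (mem_Ici.2 (by linarith [hx0, hs1.1, hs2.1] : (0:ℝ) ≤ s2))
      hp.le hq.le hpq
    have hc2 : p * Φ' t + q * Φ' s2 ≤ Φ' (p • t + q • s2) := hc
    rw [hcomb, hs1'] at hc2
    nlinarith [mul_pos hq hs2pos]
  -- Φ is strictly decreasing on [0, s1]
  have hanti : StrictAntiOn Φ (Icc 0 s1) := by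
    apply strictAntiOn_of_deriv_neg (convex_Icc 0 s1) hcont.continuousOn
    intro t ht
    rw [interior_Icc] at ht
    rw [(hderiv t).deriv]
    exact hneg t ht
  have hxs1 : x < s1 := hs1.1
  have hlt : Φ x < Φ 0 :=
    hanti (left_mem_Icc.2 (by linarith [hx0] : (0:ℝ) ≤ s1)) ⟨hx0.le, hxs1.le⟩ hx0
  have hΦ0 : Φ 0 = -δ := by
    simp [hΦ, phiAux, zero_pow hn]
  rw [hx, hΦ0] at hlt
  linarith

/-- If `0 < c_k + k < n−1`, then there exists a unique `λ ∈ (1,b)` such that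
`C_k(λ) + k·λ = (n−1)/λ`. -/
theorem modified_J_lambda_exists_unique
    (n : ℕ) (hn : 2 ≤ n) (a b k : ℝ) (ha : 1 < a) (hb : 1 < b) (hk : 0 ≤ k)
    (c ck : ℝ)
    (hc : c = n * (a * b ^ (n - 1) - 1) / (b ^ n - 1))
    (hck : ck = c - (n * k / (n + 1)) * (b ^ (n + 1) - 1) / (b ^ n - 1))
    (Ck : ℝ → ℝ)
    (hCk : ∀ s, Ck s = n * (a * b ^ (n - 1) - s ^ (n - 1)) / (b ^ n - s ^ n)
      - (n * k / (n + 1)) * (b ^ (n + 1) - s ^ (n + 1)) / (b ^ n - s ^ n))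
    (h0 : 0 < ck + k) (h1 : ck + k < (n : ℝ) - 1) :
    ∃! l : ℝ, l ∈ Set.Ioo (1 : ℝ) b ∧ Ck l + k * l = ((n : ℝ) - 1) / l := by
  obtain ⟨m, rfl⟩ : ∃ m, n = m + 2 := ⟨n - 2, by omega⟩
  have h21 : m + 2 - 1 = m + 1 := rfl
  have hb0 : (0:ℝ) < b := lt_trans one_pos hb
  have hbn : 1 < b ^ (m + 2) := one_lt_pow₀ hb (by omega)
  have hbn1 : b ^ (m + 2) - 1 ≠ 0 := ne_of_gt (by linarith)
  have hN1 : ((m : ℝ) + 3) ≠ 0 := by positivity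
  set α : ℝ := ((m : ℝ) + 2) * a * b ^ (m + 1)
      - (((m : ℝ) + 2) * k / ((m : ℝ) + 3)) * b ^ (m + 3) with hα
  set β : ℝ := k * b ^ (m + 2) with hβ
  set γ : ℝ := k / ((m : ℝ) + 3) with hγ
  set δ : ℝ := ((m : ℝ) + 1) * b ^ (m + 2) with hδ
  set Φ : ℝ → ℝ := phiAux α β γ δ (m + 2) with hΦdef
  have hβ0 : 0 ≤ β := by positivity
  have hγ0 : 0 ≤ γ := by positivity
  have hδ0 : 0 < δ := by positivity
  have hdiff : Differentiable ℝ Φ := fun s => (phiAux_hasDerivAt α β γ δ (m + 2) s).differentiableAt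
  have hcont : Continuous Φ := hdiff.continuous
  -- the key identity
  have hid : ∀ l : ℝ, 1 < l → l < b →
      Ck l + k * l - (((m + 2 : ℕ) : ℝ) - 1) / l
        = Φ l / (l * (b ^ (m + 2) - l ^ (m + 2))) := by
    intro l hl1 hlb
    have hl0 : (0:ℝ) < l := by linarith
    have hlt : l ^ (m + 2) < b ^ (m + 2) := pow_lt_pow_left₀ hlb hl0.le (by omega)
    have hden : b ^ (m + 2) - l ^ (m + 2) ≠ 0 := ne_of_gt (by linarith)
    rw [hCk l, hΦdef]
    simp only [phiAux, hα, hβ, hγ, hδ, h21]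
    push_cast
    field_simp
    ring
  have key : ∀ l : ℝ, l ∈ Set.Ioo (1:ℝ) b →
      ((Ck l + k * l = (((m + 2 : ℕ) : ℝ) - 1) / l) ↔ Φ l = 0) := by
    intro l hl
    have hl0 : (0:ℝ) < l := by linarith [hl.1]
    have hlt : l ^ (m + 2) < b ^ (m + 2) := pow_lt_pow_left₀ hl.2 hl0.le (by omega)
    have hD : l * (b ^ (m + 2) - l ^ (m + 2)) ≠ 0 :=
      mul_ne_zero hl0.ne' (ne_of_gt (by linarith))
    constructor
    · intro h
      have h2 : Φ l / (l * (b ^ (m + 2) - l ^ (m + 2))) = 0 := by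
        rw [← hid l hl.1 hl.2, h, sub_self]
      exact (div_eq_zero_iff.mp h2).resolve_right hD
    · intro h
      have h2 := hid l hl.1 hl.2
      rw [h, zero_div] at h2
      exact sub_eq_zero.mp h2
  -- values at the endpoints
  have hPhi1 : Φ 1 = (ck + k - ((m : ℝ) + 1)) * (b ^ (m + 2) - 1) := by
    rw [hck, hc, hΦdef]
    simp only [phiAux, hα, hβ, hγ, hδ, h21]
    push_cast
    field_simp
    ring
  have hPhi1neg : Φ 1 < 0 := by
    rw [hPhi1]
    apply mul_neg_of_neg_of_pos
    · push_cast at h1; linarith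
    · linarith
  have hPhibpos : 0 < Φ b := by
    have hval : Φ b = ((m : ℝ) + 2) * b ^ (m + 2) * (a - 1) := by
      rw [hΦdef]
      simp only [phiAux, hα, hβ, hγ, hδ]
      field_simp
      ring
    rw [hval]
    apply mul_pos (by positivity)
    linarith
  -- existence
  obtain ⟨l, hlmem, hlroot⟩ :=
    intermediate_value_Ioo hb.le hcont.continuousOn ⟨hPhi1neg, hPhibpos⟩
  refine ⟨l, ⟨hlmem, (key l hlmem).mpr hlroot⟩, ?_⟩
  rintro l' ⟨hl'mem, hl'eq⟩
  have hroot' : Φ l' = 0 := (key l' hl'mem).mp hl'eq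
  by_contra hne
  rcases lt_or_gt_of_ne hne with h | h
  · exact phiAux_atMostOne α β γ δ (m + 2) b (by omega) hβ0 hγ0 hδ0 hPhibpos l' l
      (by linarith [hl'mem.1]) h hlmem.2 hroot' hlroot
  · exact phiAux_atMostOne α β γ δ (m + 2) b (by omega) hβ0 hγ0 hδ0 hPhibpos l l'
      (by linarith [hlmem.1]) h hl'mem.2 hlroot hroot'
end

section
/- If λ ∈ (1,b) satisfies C_k(λ) + k·λ = (n−1)/λ, then ψ_λ'(λ) = 0, ψ_λ is strictly convex on (0,∞), and ψ_λ'(τ) > 0 for every τ > λ. Consequently, the function σ: [1,b] → ℝ defined by σ(τ) = 1 for τ ∈ [1,λ] and σ(τ) = ψ_λ(τ) for τ ∈ [λ,b] is convex and nondecreasing on [1,b], with σ(1) = 1 and σ(b) = a. -/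
/-- If `λ ∈ (1,b)` satisfies `C_k(λ) + k·λ = (n−1)/λ`, then `ψ_λ'(λ) = 0`,
`ψ_λ` is strictly convex on `(0,∞)`, and `ψ_λ'(τ) > 0` for every `τ > λ`. Consequently
`σ` (equal to `1` on `[1,λ]` and to `ψ_λ` on `[λ,b]`) is convex and nondecreasing on
`[1,b]`, with `σ(1) = 1` and `σ(b) = a`. -/
theorem modified_J_limit_profile_properties
    (n : ℕ) (hn : 2 ≤ n) (a b k : ℝ) (ha : 1 < a) (hb : 1 < b) (hk : 0 ≤ k)
    (Ck Ak : ℝ → ℝ)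
    (hCk : ∀ s, Ck s = n * (a * b ^ (n - 1) - s ^ (n - 1)) / (b ^ n - s ^ n)
      - (n * k / (n + 1)) * (b ^ (n + 1) - s ^ (n + 1)) / (b ^ n - s ^ n))
    (hAk : ∀ s, Ak s = s ^ (n - 1) * ((n : ℝ) + 1 - k * s ^ 2) / (n + 1)
      - s ^ n * Ck s / n)
    (l : ℝ) (hl : l ∈ Set.Ioo (1 : ℝ) b)
    (hlam : Ck l + k * l = ((n : ℝ) - 1) / l)
    (ψl : ℝ → ℝ)
    (hψl : ψl = fun τ => k * τ ^ 2 / (n + 1) + (Ck l / n) * τ + Ak l / τ ^ (n - 1))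
    (σ : ℝ → ℝ)
    (hσ : σ = fun τ => if τ ≤ l then 1 else ψl τ) :
    deriv ψl l = 0
    ∧ StrictConvexOn ℝ (Set.Ioi 0) ψl
    ∧ (∀ τ : ℝ, l < τ → 0 < deriv ψl τ)
    ∧ ConvexOn ℝ (Set.Icc 1 b) σ
    ∧ MonotoneOn σ (Set.Icc 1 b)
    ∧ σ 1 = 1 ∧ σ b = a := by
  obtain ⟨hl1, hlb⟩ := hl
  have hl0 : (0:ℝ) < l := by linarith
  have hb0 : (0:ℝ) < b := by linarith
  have hn0 : (0:ℝ) < (n:ℝ) := by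
    have : (2:ℝ) ≤ (n:ℝ) := by exact_mod_cast hn
    linarith
  have hn2 : (2:ℝ) ≤ (n:ℝ) := by exact_mod_cast hn
  have hn1 : (0:ℝ) < (n:ℝ) + 1 := by linarith
  have hC : Ck l = ((n:ℝ) - 1) / l - k * l := by linarith [hlam]
  have hln : l ^ n = l ^ (n - 1) * l := by rw [← pow_succ]; congr 1; omega
  have hAform : Ak l = l ^ (n - 1) * ((n:ℝ) + 1 + k * l ^ 2) / ((n:ℝ) * ((n:ℝ) + 1)) := by
    have := hAk l
    rw [hC, hln] at this
    rw [this]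
    have hl0' : (0:ℝ) ≠ l := by linarith
    field_simp
    ring
  have hApos : 0 < Ak l := by
    rw [hAform]
    have : (0:ℝ) < l ^ (n-1) := pow_pos hl0 _
    have : (0:ℝ) < (n:ℝ) + 1 + k * l ^ 2 := by positivity
    positivity
  -- derivative
  have hD : ∀ τ : ℝ, τ ≠ 0 → HasDerivAt ψl
      (2 * k * τ / ((n:ℝ) + 1) + Ck l / (n:ℝ) - ((n:ℝ) - 1) * Ak l / τ ^ n) τ := by
    intro τ hτ
    rw [hψl]
    have h1 : HasDerivAt (fun τ : ℝ => k * τ ^ 2 / (n + 1)) (2 * k * τ / ((n:ℝ) + 1)) τ := by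
      have := ((hasDerivAt_pow 2 τ).const_mul k).div_const ((n : ℝ) + 1)
      simpa [mul_comm, mul_assoc, mul_left_comm] using this
    have h2 : HasDerivAt (fun τ : ℝ => (Ck l / (n:ℝ)) * τ) (Ck l / (n:ℝ)) τ := by
      simpa using (hasDerivAt_id τ).const_mul (Ck l / (n:ℝ))
    have h3 : HasDerivAt (fun τ : ℝ => Ak l / τ ^ (n - 1))
        (-(((n:ℝ) - 1) * Ak l / τ ^ n)) τ := by
      have hp : HasDerivAt (fun τ : ℝ => τ ^ (n - 1))
          (((n - 1 : ℕ) : ℝ) * τ ^ (n - 1 - 1)) τ := hasDerivAt_pow (n - 1) τ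
      have hne : τ ^ (n - 1) ≠ 0 := pow_ne_zero _ hτ
      have := (hasDerivAt_const τ (Ak l)).div hp hne
      refine this.congr_deriv ?_
      have hsq : (τ ^ (n - 1)) ^ 2 = τ ^ n * τ ^ (n - 2) := by
        rw [← pow_mul, ← pow_add]; congr 1; omega
      have hmm : n - 1 - 1 = n - 2 := by omega
      have hc : ((n - 1 : ℕ) : ℝ) = (n : ℝ) - 1 := by
        push_cast [Nat.cast_sub (by omega : 1 ≤ n)]; ring
      rw [hsq, hmm, hc]
      have hτn : (τ : ℝ) ^ n ≠ 0 := pow_ne_zero _ hτ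
      have hτ2 : (τ : ℝ) ^ (n - 2) ≠ 0 := pow_ne_zero _ hτ
      field_simp
      ring
    have := (h1.add h2).add h3
    exact this.congr_deriv (by ring)
  have hderiv : ∀ τ : ℝ, τ ≠ 0 → deriv ψl τ
      = 2 * k * τ / ((n:ℝ) + 1) + Ck l / (n:ℝ) - ((n:ℝ) - 1) * Ak l / τ ^ n :=
    fun τ h => (hD τ h).deriv
  -- deriv at l is 0
  have hDl : deriv ψl l = 0 := by
    rw [hderiv l (ne_of_gt hl0), hAform, hC, hln]
    have hl0' : (0:ℝ) ≠ l := by linarith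
    have hp : l ^ (n-1) ≠ 0 := pow_ne_zero _ (by linarith)
    field_simp
    ring
  -- strict monotonicity of the derivative on (0,∞)
  have hmono : StrictMonoOn (deriv ψl) (Set.Ioi 0) := by
    intro x hx y hy hxy
    simp only [Set.mem_Ioi] at hx hy
    rw [hderiv x (ne_of_gt hx), hderiv y (ne_of_gt hy)]
    have hxn : (0:ℝ) < x ^ n := pow_pos hx _
    have hyn : x ^ n < y ^ n := pow_lt_pow_left₀ hxy (le_of_lt hx) (by omega)
    have h1 : 2 * k * x / ((n:ℝ) + 1) ≤ 2 * k * y / ((n:ℝ) + 1) := by gcongr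
    have h2 : ((n:ℝ) - 1) * Ak l / y ^ n < ((n:ℝ) - 1) * Ak l / x ^ n := by
      apply div_lt_div_of_pos_left _ hxn hyn
      have : (0:ℝ) < (n:ℝ) - 1 := by linarith
      positivity
    linarith
  have hcont : ContinuousOn ψl (Set.Ioi 0) := fun τ hτ =>
    ((hD τ (ne_of_gt hτ)).differentiableAt.continuousAt).continuousWithinAt
  have hconv : StrictConvexOn ℝ (Set.Ioi 0) ψl := by
    apply StrictMonoOn.strictConvexOn_of_deriv (convex_Ioi 0) hcont
    rwa [interior_Ioi]
  have hpos : ∀ τ : ℝ, l < τ → 0 < deriv ψl τ := by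
    intro τ hτ
    have h := hmono (Set.mem_Ioi.mpr hl0) (Set.mem_Ioi.mpr (by linarith)) hτ
    rw [hDl] at h
    exact h
  -- ψl l = 1
  have hψl1 : ψl l = 1 := by
    rw [hψl]
    simp only
    rw [hAk l, hln]
    have hp : l ^ (n-1) ≠ 0 := pow_ne_zero _ (by linarith)
    field_simp
    ring
  -- ψl b = a
  have hψlb : ψl b = a := by
    rw [hψl]
    simp only
    have hbn : b ^ n = b ^ (n - 1) * b := by rw [← pow_succ]; congr 1; omega
    have hln1 : l ^ (n+1) = l ^ (n - 1) * l ^ 2 := by rw [← pow_add]; congr 1; omega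
    have hbn1 : b ^ (n+1) = b ^ (n - 1) * b ^ 2 := by rw [← pow_add]; congr 1; omega
    have hpl : l ^ (n-1) ≠ 0 := pow_ne_zero _ (by linarith)
    have hpb : b ^ (n-1) ≠ 0 := pow_ne_zero _ (by linarith)
    have hne : b ^ n - l ^ n ≠ 0 := by
      have : l ^ n < b ^ n := pow_lt_pow_left₀ hlb (le_of_lt hl0) (by omega)
      linarith
    rw [hAk l, hCk l, hln, hbn, hln1, hbn1]
    have hne' : b ^ (n-1) * b - l ^ (n-1) * l ≠ 0 := by rw [← hln, ← hbn]; exact hne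
    have hne'' : b * b ^ (n-1) - l * l ^ (n-1) ≠ 0 := by rw [mul_comm b, mul_comm l]; exact hne'
    generalize b ^ (n-1) = B at *
    generalize l ^ (n-1) = L at *
    have hn1' : (n:ℝ) + 1 ≠ 0 := by positivity
    obtain ⟨D, hDd⟩ : ∃ D, D = B * b - L * l := ⟨_, rfl⟩
    rw [← hDd]
    have hD0 : D ≠ 0 := hDd ▸ hne'
    field_simp
    subst hDd
    ring
  -- monotonicity of ψl on [l, b]
  have hsub : Set.Icc l b ⊆ Set.Ioi 0 := fun x hx => lt_of_lt_of_le hl0 hx.1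
  have hmonoIcc : MonotoneOn ψl (Set.Icc l b) := by
    apply monotoneOn_of_deriv_nonneg (convex_Icc l b) (hcont.mono hsub)
    · intro x hx
      rw [interior_Icc] at hx
      exact ((hD x (ne_of_gt (lt_trans hl0 hx.1))).differentiableAt).differentiableWithinAt
    · intro x hx
      rw [interior_Icc] at hx
      exact (hpos x hx.1).le
  -- σ as a composition
  have hσfun : σ = (fun τ => ψl (max l τ)) := by
    funext τ
    rw [hσ]
    by_cases h : τ ≤ l
    · simp [h, max_eq_left h, hψl1]
    · push_neg at h
      simp [not_le.mpr h, max_eq_right h.le]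
  have himg : (fun τ : ℝ => max l τ) '' Set.Icc 1 b = Set.Icc l b := by
    apply subset_antisymm
    · rintro _ ⟨x, hx, rfl⟩
      exact ⟨le_max_left _ _, max_le hlb.le hx.2⟩
    · intro y hy
      exact ⟨y, ⟨le_trans hl1.le hy.1, hy.2⟩, max_eq_right hy.1⟩
  have hmaxconv : ConvexOn ℝ (Set.Icc 1 b) (fun τ : ℝ => max l τ) := by
    have h : ConvexOn ℝ (Set.Icc (1:ℝ) b) ((fun _ : ℝ => l) ⊔ id) :=
      (convexOn_const l (convex_Icc (1:ℝ) b)).sup (convexOn_id (convex_Icc (1:ℝ) b))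
    have heq : ((fun _ : ℝ => l) ⊔ id) = (fun τ : ℝ => max l τ) := by
      funext τ; simp [Pi.sup_apply]
    rwa [heq] at h
  have hconvIcc : ConvexOn ℝ (Set.Icc l b) ψl :=
    (hconv.convexOn).subset hsub (convex_Icc l b)
  have hσconv : ConvexOn ℝ (Set.Icc 1 b) σ := by
    rw [hσfun]
    exact ConvexOn.comp (himg ▸ hconvIcc) hmaxconv (himg ▸ hmonoIcc)
  have hσmono : MonotoneOn σ (Set.Icc 1 b) := by
    rw [hσfun]
    intro x hx y hy hxy
    exact hmonoIcc ⟨le_max_left _ _, max_le hlb.le hx.2⟩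
      ⟨le_max_left _ _, max_le hlb.le hy.2⟩ (max_le_max le_rfl hxy)
  refine ⟨hDl, hconv, hpos, hσconv, hσmono, ?_, ?_⟩
  · rw [hσ]; simp [hl1.le]
  · rw [hσ]; simp [not_le.mpr hlb, hψlb]
end

section
/- If 0 < c_k + k < n−1, then A := (n+1−k)/(n+1) − c_k/n > 0, so ψ̃ is strictly convex on (0,∞); moreover ψ̃'(1) = c_k + k − (n−1) < 0, there exists a unique s̄ ∈ (1,b) with ψ̃'(s̄) = 0, and there exists a unique s ∈ (s̄, b) with ψ̃(s) = 1. -/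
set_option maxHeartbeats 1000000 in
/-- If `0 < c_k + k < n−1`, then `A = (n+1−k)/(n+1) − c_k/n > 0`, so `ψ̃`
is strictly convex on `(0,∞)`; moreover `ψ̃'(1) = c_k + k − (n−1) < 0`, there exists a
unique `s̄ ∈ (1,b)` with `ψ̃'(s̄) = 0`, and there exists a unique `s ∈ (s̄,b)` with
`ψ̃(s) = 1`. -/
theorem modified_J_unstable_profile_properties
    (n : ℕ) (hn : 2 ≤ n) (a b k : ℝ) (ha : 1 < a) (hb : 1 < b) (hk : 0 ≤ k)
    (c ck : ℝ)
    (hc : c = n * (a * b ^ (n - 1) - 1) / (b ^ n - 1))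
    (hck : ck = c - (n * k / (n + 1)) * (b ^ (n + 1) - 1) / (b ^ n - 1))
    (ψt : ℝ → ℝ)
    (hψt : ψt = fun τ => k * τ ^ 2 / (n + 1) + (ck / n) * τ +
      (((n : ℝ) + 1 - k) / (n + 1) - ck / n) / τ ^ (n - 1))
    (h0 : 0 < ck + k) (h1 : ck + k < (n : ℝ) - 1) :
    0 < ((n : ℝ) + 1 - k) / (n + 1) - ck / n
    ∧ StrictConvexOn ℝ (Set.Ioi 0) ψt
    ∧ deriv ψt 1 = ck + k - ((n : ℝ) - 1)
    ∧ ck + k - ((n : ℝ) - 1) < 0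
    ∧ (∃! sb : ℝ, sb ∈ Set.Ioo (1 : ℝ) b ∧ deriv ψt sb = 0)
    ∧ (∀ sb ∈ Set.Ioo (1 : ℝ) b, deriv ψt sb = 0 →
        ∃! s : ℝ, s ∈ Set.Ioo sb b ∧ ψt s = 1) := by
  obtain ⟨m, rfl⟩ : ∃ m, n = m + 2 := ⟨n - 2, by omega⟩
  clear hn
  set M : ℝ := (m : ℝ) with hMdef
  have hM0 : 0 ≤ M := Nat.cast_nonneg m
  set A : ℝ := (M + 3 - k) / (M + 3) - ck / (M + 2) with hAdef
  have hcast : ((m + 2 : ℕ) : ℝ) = M + 2 := by push_cast; ring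
  have hM2 : (0:ℝ) < M + 2 := by linarith
  have hM3 : (0:ℝ) < M + 3 := by linarith
  have hb0 : (0:ℝ) < b := by linarith
  have h1' : ck + k < M + 1 := by rw [hcast] at h1; linarith
  -- A > 0
  have hA : 0 < A := by
    rw [hAdef, sub_pos, div_lt_div_iff₀ hM2 hM3]
    nlinarith [mul_nonneg hk hM0]
  have hψ : ψt = fun τ => k * τ ^ 2 / (M + 3) + ck / (M + 2) * τ + A / τ ^ (m + 1) := by
    rw [hψt]; funext τ
    have h : m + 2 - 1 = m + 1 := rfl
    rw [h, hcast, hAdef]; ring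
  have hc' : c = (M + 2) * (a * b ^ (m + 1) - 1) / (b ^ (m + 2) - 1) := by
    rw [hc, hcast]; norm_num
  have hck' : ck = c - ((M + 2) * k / (M + 3)) * (b ^ (m + 3) - 1) / (b ^ (m + 2) - 1) := by
    rw [hck, hcast]; norm_num; ring_nf
  have hbm : (0:ℝ) < b ^ (m + 2) - 1 := by
    have := one_lt_pow₀ hb (n := m + 2) (by omega)
    linarith
  -- values at 1 and b
  have hψ1 : ψt 1 = 1 := by
    rw [hψ]; simp only [one_pow]
    rw [hAdef]; field_simp; ring
  have hψb : ψt b = a := by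
    rw [hψ, hAdef, hck', hc']
    have hb1 : b ^ (m + 1) ≠ 0 := by positivity
    have hb2 : b ^ (m + 2) - 1 ≠ 0 := ne_of_gt hbm
    field_simp
    ring
  -- derivative
  set D : ℝ → ℝ := fun x => 2 * k * x / (M + 3) + ck / (M + 2) - A * (M + 1) / x ^ (m + 2)
    with hDdef
  have key : ∀ x : ℝ, x ≠ 0 → HasDerivAt ψt (D x) x := by
    intro x hx
    have e1 : HasDerivAt (fun τ : ℝ => k * τ ^ 2 / (M + 3)) (2 * k * x / (M + 3)) x := by
      have h : HasDerivAt (fun τ : ℝ => τ ^ 2) (2 * x) x := by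
        simpa using hasDerivAt_pow 2 x
      have := (h.const_mul k).div_const (M + 3)
      beta_reduce at this
      exact this.congr_deriv (by ring)
    have e2 : HasDerivAt (fun τ : ℝ => ck / (M + 2) * τ) (ck / (M + 2)) x := by
      simpa using (hasDerivAt_id x).const_mul (ck / (M + 2))
    have e3 : HasDerivAt (fun τ : ℝ => A / τ ^ (m + 1)) (-(A * (M + 1) / x ^ (m + 2))) x := by
      have hp : HasDerivAt (fun τ : ℝ => τ ^ (m + 1)) ((m + 1 : ℕ) * x ^ m) x := by
        simpa using hasDerivAt_pow (m + 1) x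
      have hinv := (hp.inv (pow_ne_zero _ hx)).const_mul A
      have hfun : (fun τ : ℝ => A * (τ ^ (m + 1))⁻¹) = fun τ : ℝ => A / τ ^ (m + 1) := by
        funext τ; rw [div_eq_mul_inv]
      simp only [Pi.inv_apply] at hinv
      rw [hfun] at hinv
      refine hinv.congr_deriv ?_
      have hxm : x ^ m ≠ 0 := pow_ne_zero _ hx
      push_cast
      field_simp
      ring
    have hDx : D x = 2 * k * x / (M + 3) + ck / (M + 2) + -(A * (M + 1) / x ^ (m + 2)) := by
      rw [hDdef]; ring
    rw [hψ, hDx]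
    exact (e1.add e2).add e3
  have hderiv : ∀ x : ℝ, x ≠ 0 → deriv ψt x = D x := fun x hx => (key x hx).deriv
  -- strict monotonicity of D on (0, ∞)
  have hDmono : StrictMonoOn D (Set.Ioi 0) := by
    intro x hx y hy hxy
    simp only [Set.mem_Ioi] at hx hy
    have hxp : (0:ℝ) < x ^ (m + 2) := by positivity
    have hyp : (0:ℝ) < y ^ (m + 2) := by positivity
    have hpow : x ^ (m + 2) < y ^ (m + 2) := by
      exact pow_lt_pow_left₀ hxy hx.le (Nat.succ_ne_zero (m+1))
    have hAM : 0 < A * (M + 1) := by positivity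
    have h3 : A * (M + 1) / y ^ (m + 2) < A * (M + 1) / x ^ (m + 2) :=
      div_lt_div_of_pos_left hAM hxp hpow
    have h4 : 2 * k * x / (M + 3) ≤ 2 * k * y / (M + 3) := by
      gcongr
    show D x < D y
    rw [hDdef]
    dsimp only
    linarith
  
  have hψcont : ContinuousOn ψt (Set.Ioi 0) := fun x hx =>
    ((key x (ne_of_gt hx)).differentiableAt.continuousAt).continuousWithinAt
  have hDcont : ContinuousOn D {x : ℝ | x ≠ 0} := by
    rw [hDdef]
    apply ContinuousOn.sub
    · exact (((continuous_const.mul continuous_id).div_const _).continuousOn).add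
        continuousOn_const
    · exact continuousOn_const.div (continuous_pow _).continuousOn
        (fun x hx => pow_ne_zero _ hx)
  have hconv : StrictConvexOn ℝ (Set.Ioi 0) ψt := by
    apply StrictMonoOn.strictConvexOn_of_deriv (convex_Ioi 0) hψcont
    rw [interior_Ioi]
    intro x hx y hy hxy
    rw [hderiv x (ne_of_gt hx), hderiv y (ne_of_gt hy)]
    exact hDmono hx hy hxy
  have hD1 : D 1 = ck + k - (M + 1) := by
    rw [hDdef]; dsimp only
    rw [hAdef]
    field_simp
    ring
  have hD1neg : D 1 < 0 := by rw [hD1]; linarith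
  have hsub1 : Set.Icc (1:ℝ) b ⊆ Set.Ioi 0 := fun x hx => lt_of_lt_of_le one_pos hx.1
  have hDb : 0 < D b := by
    obtain ⟨ξ, hξ, hξeq⟩ := exists_hasDerivAt_eq_slope ψt D hb (hψcont.mono hsub1)
      (fun x hx => key x (ne_of_gt (lt_trans one_pos hx.1)))
    have hξ0 : (0:ℝ) < ξ := lt_trans one_pos hξ.1
    have hpos : 0 < D ξ := by
      rw [hξeq, hψb, hψ1]
      apply div_pos <;> linarith
    have := hDmono (Set.mem_Ioi.mpr hξ0) (Set.mem_Ioi.mpr hb0) hξ.2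
    linarith
  have hDIcc : ContinuousOn D (Set.Icc 1 b) :=
    hDcont.mono (fun x hx => ne_of_gt (hsub1 hx))
  obtain ⟨sb₀, hsb₀, hsb₀eq⟩ := intermediate_value_Ioo (le_of_lt hb) hDIcc
    (Set.mem_Ioo.mpr ⟨hD1neg, hDb⟩)
  have hsbuniq : ∀ y ∈ Set.Ioo (1:ℝ) b, deriv ψt y = 0 → y = sb₀ := by
    intro y hy hyd
    have hy0 : (0:ℝ) < y := lt_trans one_pos hy.1
    have hsb0 : (0:ℝ) < sb₀ := lt_trans one_pos hsb₀.1
    apply hDmono.injOn (Set.mem_Ioi.mpr hy0) (Set.mem_Ioi.mpr hsb0)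
    rw [← hderiv y (ne_of_gt hy0), hyd, hsb₀eq]
  refine ⟨?_, hconv, ?_, ?_, ?_, ?_⟩
  · rw [hcast, show (M + 2 + 1 : ℝ) = M + 3 by ring]
    exact hA
  · rw [hcast, show (M + 2 - 1 : ℝ) = M + 1 by ring]
    rw [hderiv 1 one_ne_zero, hD1]
  · rw [hcast]; linarith
  · exact ⟨sb₀, ⟨hsb₀, by
      rw [hderiv sb₀ (ne_of_gt (lt_trans one_pos hsb₀.1))]; exact hsb₀eq⟩,
      fun y hy => hsbuniq y hy.1 hy.2⟩
  · intro sb hsb hsbd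
    have hsb0 : (0:ℝ) < sb := lt_trans one_pos hsb.1
    have hDsb : D sb = 0 := by rw [← hderiv sb (ne_of_gt hsb0)]; exact hsbd
    have hsubsb : Set.Icc sb b ⊆ Set.Ioi 0 := fun x hx => lt_of_lt_of_le hsb0 hx.1
    have hanti : StrictAntiOn ψt (Set.Icc 1 sb) := by
      apply strictAntiOn_of_deriv_neg (convex_Icc 1 sb)
        (hψcont.mono (fun x hx => lt_of_lt_of_le one_pos hx.1))
      intro x hx
      rw [interior_Icc] at hx
      have hx0 : (0:ℝ) < x := lt_trans one_pos hx.1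
      rw [hderiv x (ne_of_gt hx0)]
      have := hDmono (Set.mem_Ioi.mpr hx0) (Set.mem_Ioi.mpr hsb0) hx.2
      rw [hDsb] at this
      exact this
    have hψsb : ψt sb < 1 := by
      have := hanti (Set.mem_Icc.mpr ⟨le_refl 1, hsb.1.le⟩)
        (Set.mem_Icc.mpr ⟨hsb.1.le, le_refl sb⟩) hsb.1
      rwa [hψ1] at this
    have hmono : StrictMonoOn ψt (Set.Icc sb b) := by
      apply strictMonoOn_of_deriv_pos (convex_Icc sb b) (hψcont.mono hsubsb)
      intro x hx
      rw [interior_Icc] at hx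
      have hx0 : (0:ℝ) < x := lt_trans hsb0 hx.1
      rw [hderiv x (ne_of_gt hx0)]
      have := hDmono (Set.mem_Ioi.mpr hsb0) (Set.mem_Ioi.mpr hx0) hx.1
      rw [hDsb] at this
      exact this
    obtain ⟨s, hs, hseq⟩ := intermediate_value_Ioo hsb.2.le (hψcont.mono hsubsb)
      (Set.mem_Ioo.mpr ⟨hψsb, by rw [hψb]; exact ha⟩)
    refine ⟨s, ⟨hs, hseq⟩, ?_⟩
    intro y ⟨hy, hyeq⟩
    apply hmono.injOn (Set.mem_Icc.mpr ⟨hy.1.le, hy.2.le⟩)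
      (Set.mem_Icc.mpr ⟨hs.1.le, hs.2.le⟩)
    rw [hyeq, hseq]
end

section
/- The function ψ₀ satisfies ψ₀(1) = 1 and ψ₀(b) = a, is strictly increasing and strictly concave on [1,b], and satisfies P[ψ₀](τ) < 0 for every τ ∈ [1,b]. -/
lemma psi0_hasDerivAt (c : ℝ) (n : ℕ) {x : ℝ} (hx : x ≠ 0) :
    HasDerivAt (fun τ : ℝ => c * (τ ^ (-(n:ℤ)) - 1) + 1)
      (c * (-(n:ℤ)) * x ^ (-(n:ℤ) - 1)) x := by
  have h : HasDerivAt (fun τ : ℝ => c * (τ ^ (-(n:ℤ)) - 1) + 1) _ x := (((hasDerivAt_zpow (-(n:ℤ)) x (Or.inl hx)).sub_const 1).const_mul c).add_const 1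
  convert h using 1
  push_cast
  ring

lemma psi0_aux (N c P τ k : ℝ) (hN : 2 ≤ N) (hc : c < 0) (hP : 0 < P)
    (hτ : 1 ≤ τ) (hk : 0 ≤ k) :
    c * -N * ((-N - 1) * P) + (N - 1) * (c * -N * (P * τ)) / τ
      - (N - 1) * (c * (P * τ ^ 2 - 1) + 1) / τ ^ 2 - k < 0 := by
  have hτ0 : (0:ℝ) < τ := lt_of_lt_of_le one_pos hτ
  have hτne : τ ≠ 0 := ne_of_gt hτ0
  have e : c * -N * ((-N - 1) * P) + (N - 1) * (c * -N * (P * τ)) / τ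
      - (N - 1) * (c * (P * τ ^ 2 - 1) + 1) / τ ^ 2 - k
      = c * (N + 1) * P + (N - 1) * (c - 1) / τ ^ 2 - k := by
    field_simp
    ring
  rw [e]
  have t1 : c * (N + 1) * P < 0 :=
    mul_neg_of_neg_of_pos (mul_neg_of_neg_of_pos hc (by linarith)) hP
  have t2 : (N - 1) * (c - 1) / τ ^ 2 < 0 := by
    apply div_neg_of_neg_of_pos ?_ (by positivity)
    nlinarith
  linarith

/-- The function `ψ₀(τ) = (a−1)/(b^{−n}−1)·(τ^{−n} − 1) + 1` satisfies
`ψ₀(1) = 1` and `ψ₀(b) = a`, is strictly increasing and strictly concave on `[1,b]`,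
and satisfies `P[ψ₀](τ) < 0` for every `τ ∈ [1,b]`. -/
theorem modified_J_initial_data_properties
    (n : ℕ) (hn : 2 ≤ n) (a b k : ℝ) (ha : 1 < a) (hb : 1 < b) (hk : 0 ≤ k)
    (ψ₀ : ℝ → ℝ)
    (hψ₀ : ψ₀ = fun τ => (a - 1) / ((b ^ n)⁻¹ - 1) * ((τ ^ n)⁻¹ - 1) + 1) :
    ψ₀ 1 = 1 ∧ ψ₀ b = a
    ∧ StrictMonoOn ψ₀ (Set.Icc 1 b)
    ∧ StrictConcaveOn ℝ (Set.Icc 1 b) ψ₀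
    ∧ (∀ τ ∈ Set.Icc (1 : ℝ) b,
        deriv (deriv ψ₀) τ + ((n : ℝ) - 1) * deriv ψ₀ τ / τ
          - ((n : ℝ) - 1) * ψ₀ τ / τ ^ 2 - k < 0) := by
  have hn0 : n ≠ 0 := by omega
  have hb0 : (0:ℝ) < b := lt_trans one_pos hb
  have hbn : (1:ℝ) < b ^ n := one_lt_pow₀ hb hn0
  have hden : (b ^ n)⁻¹ - 1 < 0 := by
    have : (b ^ n)⁻¹ < 1 := inv_lt_one_of_one_lt₀ hbn
    linarith
  set c : ℝ := (a - 1) / ((b ^ n)⁻¹ - 1) with hc_def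
  have hc : c < 0 := div_neg_of_pos_of_neg (by linarith) hden
  have hψ : ψ₀ = fun τ : ℝ => c * (τ ^ (-(n:ℤ)) - 1) + 1 := by
    rw [hψ₀]; funext τ; rw [zpow_neg, zpow_natCast]
  -- derivative formulas
  have hderiv : ∀ x : ℝ, x ≠ 0 → deriv ψ₀ x = c * (-(n:ℤ)) * x ^ (-(n:ℤ) - 1) := by
    intro x hx
    rw [hψ]
    exact (psi0_hasDerivAt c n hx).deriv
  have hderiv2 : ∀ x : ℝ, x ≠ 0 →
      deriv (deriv ψ₀) x
        = c * (-(n:ℤ)) * (((-(n:ℤ) - 1 : ℤ) : ℝ) * x ^ (-(n:ℤ) - 1 - 1)) := by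
    intro x hx
    have hev : deriv ψ₀ =ᶠ[nhds x] fun y => c * (-(n:ℤ)) * y ^ (-(n:ℤ) - 1) := by
      filter_upwards [eventually_ne_nhds hx] with y hy using hderiv y hy
    rw [hev.deriv_eq]
    exact ((hasDerivAt_zpow (-(n:ℤ) - 1) x (Or.inl hx)).const_mul (c * (-(n:ℤ)))).deriv
  have hmono : StrictMonoOn ψ₀ (Set.Icc 1 b) := by
    intro x hx y hy hxy
    rw [hψ₀]
    have hx1 : (1:ℝ) ≤ x := hx.1
    have hy1 : (1:ℝ) ≤ y := hy.1
    have hxn : (0:ℝ) < x ^ n := by positivity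
    have hlt : x ^ n < y ^ n := pow_lt_pow_left₀ hxy (by linarith) hn0
    have hinv : (y ^ n)⁻¹ < (x ^ n)⁻¹ := by
      apply inv_strictAnti₀ hxn hlt
    have := mul_lt_mul_of_neg_left hinv hc
    simp only
    nlinarith
  refine ⟨by simp [hψ], ?_, hmono, ?_, ?_⟩
  · rw [hψ₀]
    simp only
    rw [hc_def, div_mul_cancel₀ _ (ne_of_lt hden)]
    ring
  · apply strictConcaveOn_of_deriv2_neg (convex_Icc 1 b)
    · rw [hψ]
      apply ContinuousOn.add (ContinuousOn.mul continuousOn_const ?_) continuousOn_const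
      apply ContinuousOn.sub ?_ continuousOn_const
      intro x hx
      exact (ContinuousAt.continuousWithinAt
        (continuousAt_zpow₀ x _ (Or.inl (by have := hx.1; positivity))))
    · intro x hx
      rw [interior_Icc] at hx
      have hx0 : (0:ℝ) < x := lt_trans one_pos hx.1
      have hxne : x ≠ 0 := ne_of_gt hx0
      simp only [Function.iterate_succ, Function.iterate_zero, Function.comp_apply, id]
      rw [hderiv2 x hxne]
      have hz : (0:ℝ) < x ^ (-(n:ℤ) - 1 - 1) := zpow_pos hx0 _
      have hnn : (0:ℝ) < (n:ℝ) := by positivity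
      have hq : (0:ℝ) < (n:ℝ) * ((n:ℝ) + 1) * x ^ (-(n:ℤ) - 1 - 1) :=
        mul_pos (mul_pos hnn (by linarith)) hz
      have := mul_neg_of_neg_of_pos hc hq
      push_cast
      nlinarith [this]
  · intro τ hτ
    have hτ1 : (1:ℝ) ≤ τ := hτ.1
    have hτ0 : (0:ℝ) < τ := lt_of_lt_of_le one_pos hτ1
    have hτne : τ ≠ 0 := ne_of_gt hτ0
    rw [hderiv2 τ hτne, hderiv τ hτne, hψ]
    set P : ℝ := τ ^ (-(n:ℤ) - 1 - 1) with hP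
    have hPpos : 0 < P := zpow_pos hτ0 _
    have h1 : τ ^ (-(n:ℤ) - 1) = P * τ := by
      rw [hP, zpow_sub_one₀ hτne (-(n:ℤ) - 1)]
      field_simp
    have h1' : τ ^ (-(n:ℤ)) = τ ^ (-(n:ℤ) - 1) * τ := by
      rw [zpow_sub_one₀ hτne (-(n:ℤ))]
      field_simp
    have h2 : τ ^ (-(n:ℤ)) = P * τ ^ 2 := by
      rw [h1', h1]; ring
    simp only
    rw [h1, h2]
    have key := psi0_aux (n:ℝ) c P τ k (by exact_mod_cast hn) hc hPpos hτ1 hk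
    push_cast
    linarith [key]
end

section
/- Assume 0 < c_k + k < n−1 and let λ ∈ (1,b) satisfy C_k(λ) + k·λ = (n−1)/λ. Then 1 ≤ σ(τ) < ψ₀(τ) < a for all τ ∈ (1,b); in particular ψ₀(τ) ≥ σ(τ) for all τ ∈ [1,b]. -/
set_option maxHeartbeats 1600000 in
/-- Assume `0 < c_k + k < n−1` and `λ ∈ (1,b)` satisfies
`C_k(λ) + k·λ = (n−1)/λ`. Then `1 ≤ σ(τ) < ψ₀(τ) < a` for all `τ ∈ (1,b)`; in particular
`ψ₀(τ) ≥ σ(τ)` for all `τ ∈ [1,b]`. -/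
theorem modified_J_initial_data_above_limit
    (n : ℕ) (hn : 2 ≤ n) (a b k : ℝ) (ha : 1 < a) (hb : 1 < b) (hk : 0 ≤ k)
    (c ck : ℝ)
    (hc : c = n * (a * b ^ (n - 1) - 1) / (b ^ n - 1))
    (hck : ck = c - (n * k / (n + 1)) * (b ^ (n + 1) - 1) / (b ^ n - 1))
    (h0 : 0 < ck + k) (h1 : ck + k < (n : ℝ) - 1)
    (Ck Ak : ℝ → ℝ)
    (hCk : ∀ s, Ck s = n * (a * b ^ (n - 1) - s ^ (n - 1)) / (b ^ n - s ^ n)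
      - (n * k / (n + 1)) * (b ^ (n + 1) - s ^ (n + 1)) / (b ^ n - s ^ n))
    (hAk : ∀ s, Ak s = s ^ (n - 1) * ((n : ℝ) + 1 - k * s ^ 2) / (n + 1)
      - s ^ n * Ck s / n)
    (l : ℝ) (hl : l ∈ Set.Ioo (1 : ℝ) b)
    (hlam : Ck l + k * l = ((n : ℝ) - 1) / l)
    (ψl : ℝ → ℝ)
    (hψl : ψl = fun τ => k * τ ^ 2 / (n + 1) + (Ck l / n) * τ + Ak l / τ ^ (n - 1))
    (σ : ℝ → ℝ)
    (hσ : σ = fun τ => if τ ≤ l then 1 else ψl τ)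
    (ψ₀ : ℝ → ℝ)
    (hψ₀ : ψ₀ = fun τ => (a - 1) / ((b ^ n)⁻¹ - 1) * ((τ ^ n)⁻¹ - 1) + 1) :
    (∀ τ ∈ Set.Ioo (1 : ℝ) b, 1 ≤ σ τ ∧ σ τ < ψ₀ τ ∧ ψ₀ τ < a)
    ∧ (∀ τ ∈ Set.Icc (1 : ℝ) b, σ τ ≤ ψ₀ τ) := by
  obtain ⟨hl1, hlb⟩ := hl
  obtain ⟨m, rfl⟩ : ∃ m, n = m + 2 := ⟨n - 2, by omega⟩
  have hl0 : (0:ℝ) < l := by linarith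
  have hb0 : (0:ℝ) < b := by linarith
  have hm2 : ((m:ℝ)+2) ≠ 0 := by positivity
  have hm3 : ((m:ℝ)+3) ≠ 0 := by positivity
  have he1 : m + 2 - 1 = m + 1 := by omega
  have he2 : m + 2 + 1 = m + 3 := by omega
  have he0 : m + 1 - 1 = m := by omega
  have he3 : m + 3 - 1 = m + 2 := by omega
  have hbn1 : (1:ℝ) < b ^ (m+2) := one_lt_pow₀ hb (by omega)
  have hbinv : (b ^ (m+2) : ℝ)⁻¹ - 1 < 0 := by
    have : (b ^ (m+2):ℝ)⁻¹ < 1 := inv_lt_one_of_one_lt₀ hbn1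
    linarith
  set α : ℝ := (a - 1) / ((b ^ (m+2):ℝ)⁻¹ - 1) with hα_def
  have hαneg : α < 0 := div_neg_of_pos_of_neg (by linarith) hbinv
  -- basic ψ₀ facts
  have hψ₀1 : ψ₀ 1 = 1 := by rw [hψ₀]; simp
  have hψ₀b : ψ₀ b = a := by
    rw [hψ₀]
    show α * ((b ^ (m+2):ℝ)⁻¹ - 1) + 1 = a
    rw [hα_def, div_mul_cancel₀ _ (ne_of_lt hbinv)]
    ring
  have hψ₀gt1 : ∀ τ : ℝ, 1 < τ → 1 < ψ₀ τ := by
    intro τ hτ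
    rw [hψ₀]
    show 1 < α * ((τ ^ (m+2):ℝ)⁻¹ - 1) + 1
    have hτn : (1:ℝ) < τ ^ (m+2) := one_lt_pow₀ hτ (by omega)
    have : (τ ^ (m+2):ℝ)⁻¹ - 1 < 0 := by
      have := inv_lt_one_of_one_lt₀ hτn; linarith
    nlinarith [mul_pos_of_neg_of_neg hαneg this]
  have hψ₀lta : ∀ τ : ℝ, 0 < τ → τ < b → ψ₀ τ < a := by
    intro τ hτ0 hτb
    rw [← hψ₀b, hψ₀]
    show α * ((τ ^ (m+2):ℝ)⁻¹ - 1) + 1 < α * ((b ^ (m+2):ℝ)⁻¹ - 1) + 1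
    have hp : (0:ℝ) < τ ^ (m+2) := by positivity
    have hlt : (τ:ℝ) ^ (m+2) < b ^ (m+2) := pow_lt_pow_left₀ hτb hτ0.le (by omega)
    have : (b ^ (m+2):ℝ)⁻¹ < (τ ^ (m+2))⁻¹ := by
      apply inv_strictAnti₀ hp hlt
    nlinarith [mul_lt_mul_of_neg_left this hαneg]
  -- constants
  have hC : Ck l = ((m:ℝ)+1)/l - k*l := by
    have h := hlam
    push_cast at h
    have h2 : ((m:ℝ) + 2 - 1)/l = ((m:ℝ)+1)/l := by ring_nf
    rw [h2] at h
    linarith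
  have hA : Ak l = l^(m+1)/((m:ℝ)+2) + k*l^(m+3)/(((m:ℝ)+2)*((m:ℝ)+3)) := by
    have h := hAk l
    rw [he1, hC] at h
    push_cast at h
    rw [h]
    field_simp
    ring
  have hApos : 0 < Ak l := by
    rw [hA]
    have h1 : 0 < l^(m+1)/((m:ℝ)+2) := by positivity
    have h2 : 0 ≤ k*l^(m+3)/(((m:ℝ)+2)*((m:ℝ)+3)) := by positivity
    linarith
  -- rewritten ψl
  have hψl' : ψl = fun τ : ℝ => k*τ^2/((m:ℝ)+3) + (Ck l/((m:ℝ)+2))*τ + Ak l*(τ^(m+1))⁻¹ := by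
    rw [hψl]
    funext τ
    rw [he1]
    push_cast
    rw [div_eq_mul_inv (Ak l)]
    ring_nf
  have hψll : ψl l = 1 := by
    rw [hψl', hC, hA]
    have hln : (l:ℝ)^(m+1) ≠ 0 := by positivity
    field_simp
    ring
  -- ψl b = a
  have hΔ : (0:ℝ) < b^(m+2) - l^(m+2) := by
    have : l^(m+2) < b^(m+2) := pow_lt_pow_left₀ hlb hl0.le (by omega)
    linarith
  have hP : Ck l * (b^(m+2) - l^(m+2)) = ((m:ℝ)+2)*(a*b^(m+1) - l^(m+1))
      - (((m:ℝ)+2)*k/((m:ℝ)+3))*(b^(m+3)-l^(m+3)) := by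
    have h := hCk l
    rw [he1, he2] at h
    push_cast at h
    rw [h]
    field_simp
    ring
  have ha_eq : a = (Ck l*(b^(m+2)-l^(m+2)) + ((m:ℝ)+2)*l^(m+1)
      + (((m:ℝ)+2)*k/((m:ℝ)+3))*(b^(m+3)-l^(m+3)))/(((m:ℝ)+2)*b^(m+1)) := by
    rw [eq_div_iff (by positivity)]
    linear_combination -hP
  have hψlb : ψl b = a := by
    rw [hψl']
    rw [ha_eq, hC, hA]
    have hbn : (b:ℝ)^(m+1) ≠ 0 := by positivity
    field_simp
    ring
  -- derivative machinery
  set g : ℝ → ℝ := fun y => 2*k*y/((m:ℝ)+3) + Ck l/((m:ℝ)+2) - ((m:ℝ)+1)*Ak l*(y^(m+2))⁻¹ with hg_def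
  have hD1 : ∀ x : ℝ, x ≠ 0 → HasDerivAt ψl (g x) x := by
    intro x hx
    rw [hψl']
    have h1 : HasDerivAt (fun y:ℝ => k*y^2/((m:ℝ)+3)) (2*k*x/((m:ℝ)+3)) x := by
      have := ((hasDerivAt_pow 2 x).const_mul k).div_const ((m:ℝ)+3)
      refine this.congr_deriv ?_
      all_goals (push_cast; ring)
    have h2 : HasDerivAt (fun y:ℝ => (Ck l/((m:ℝ)+2))*y) (Ck l/((m:ℝ)+2)) x := by
      simpa using (hasDerivAt_id x).const_mul (Ck l/((m:ℝ)+2))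
    have h3 : HasDerivAt (fun y:ℝ => Ak l*(y^(m+1))⁻¹)
        (-(((m:ℝ)+1)*Ak l*(x^(m+2))⁻¹)) x := by
      have h := ((hasDerivAt_pow (m+1) x).inv (pow_ne_zero _ hx)).const_mul (Ak l)
      refine h.congr_deriv ?_
      have hxne : (x:ℝ)^(m+2) ≠ 0 := pow_ne_zero _ hx
      have hxm : (x:ℝ)^(m+1) ≠ 0 := pow_ne_zero _ hx
      simp only [he0]
      push_cast
      field_simp
      ring
    have h := (h1.add h2).add h3
    refine h.congr_deriv ?_
    all_goals (simp only [hg_def]; ring)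
  have hD2 : ∀ x : ℝ, x ≠ 0 → HasDerivAt g
      (2*k/((m:ℝ)+3) + ((m:ℝ)+1)*((m:ℝ)+2)*Ak l*(x^(m+3))⁻¹) x := by
    intro x hx
    rw [hg_def]
    have h1 : HasDerivAt (fun y:ℝ => 2*k*y/((m:ℝ)+3) + Ck l/((m:ℝ)+2)) (2*k/((m:ℝ)+3)) x := by
      simpa using (((hasDerivAt_id x).const_mul (2*k)).div_const ((m:ℝ)+3)).add_const
        (Ck l/((m:ℝ)+2))
    have h3 : HasDerivAt (fun y:ℝ => ((m:ℝ)+1)*Ak l*(y^(m+2))⁻¹)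
        (-(((m:ℝ)+1)*((m:ℝ)+2)*Ak l*(x^(m+3))⁻¹)) x := by
      have h := ((hasDerivAt_pow (m+2) x).inv (pow_ne_zero _ hx)).const_mul (((m:ℝ)+1)*Ak l)
      refine h.congr_deriv ?_
      have hxne : (x:ℝ)^(m+2) ≠ 0 := pow_ne_zero _ hx
      have hxm : (x:ℝ)^(m+3) ≠ 0 := pow_ne_zero _ hx
      simp only [he1]
      push_cast
      field_simp
      ring
    have h := h1.sub h3
    refine h.congr_deriv ?_
    ring
  have hD0 : ∀ x : ℝ, x ≠ 0 → HasDerivAt ψ₀ (-(α*((m:ℝ)+2))*(x^(m+3))⁻¹) x := by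
    intro x hx
    rw [hψ₀]
    have h := (((hasDerivAt_pow (m+2) x).inv (pow_ne_zero _ hx)).sub_const 1).const_mul α
    have h' := h.add_const 1
    refine h'.congr_deriv ?_
    have hxne : (x:ℝ)^(m+2) ≠ 0 := pow_ne_zero _ hx
    have hxm : (x:ℝ)^(m+3) ≠ 0 := pow_ne_zero _ hx
    simp only [he1]
    push_cast
    field_simp
    ring
  set Dh : ℝ → ℝ := fun y => -(α*((m:ℝ)+2))*(y^(m+3))⁻¹ - g y with hDh_def
  have hD0' : ∀ x : ℝ, x ≠ 0 → HasDerivAt (fun y : ℝ => -(α*((m:ℝ)+2))*(y^(m+3))⁻¹)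
      (α*((m:ℝ)+2)*((m:ℝ)+3)*(x^(m+4))⁻¹) x := by
    intro x hx
    have h := ((hasDerivAt_pow (m+3) x).inv (pow_ne_zero _ hx)).const_mul (-(α*((m:ℝ)+2)))
    refine h.congr_deriv ?_
    have hxne : (x:ℝ)^(m+3) ≠ 0 := pow_ne_zero _ hx
    have hxm : (x:ℝ)^(m+4) ≠ 0 := pow_ne_zero _ hx
    simp only [he3]
    push_cast
    field_simp
    ring
  -- monotonicity of ψl on [l,b]
  have hne0 : ∀ x : ℝ, x ∈ Set.Icc l b → x ≠ 0 := by
    intro x hx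
    have : 0 < x := lt_of_lt_of_le hl0 hx.1
    exact this.ne'
  have hgl : g l = 0 := by
    rw [hg_def]
    show 2*k*l/((m:ℝ)+3) + Ck l/((m:ℝ)+2) - ((m:ℝ)+1)*Ak l*(l^(m+2))⁻¹ = 0
    rw [hC, hA]
    have hln : (l:ℝ)^(m+2) ≠ 0 := by positivity
    field_simp
    ring
  have hgmono : StrictMonoOn g (Set.Icc l b) := by
    apply strictMonoOn_of_deriv_pos (convex_Icc l b)
    · intro x hx
      exact ((hD2 x (hne0 x hx)).differentiableAt.continuousAt).continuousWithinAt
    · rw [interior_Icc]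
      intro x hx
      have hx0 : (0:ℝ) < x := lt_trans hl0 hx.1
      rw [(hD2 x hx0.ne').deriv]
      have h1 : 0 ≤ 2*k/((m:ℝ)+3) := by positivity
      have h2 : 0 < ((m:ℝ)+1)*((m:ℝ)+2)*Ak l*(x^(m+3))⁻¹ := by
        apply mul_pos (mul_pos (mul_pos (by positivity) (by positivity)) hApos)
        positivity
      linarith
  have hmono : StrictMonoOn ψl (Set.Icc l b) := by
    apply strictMonoOn_of_deriv_pos (convex_Icc l b)
    · intro x hx
      exact ((hD1 x (hne0 x hx)).differentiableAt.continuousAt).continuousWithinAt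
    · rw [interior_Icc]
      intro x hx
      rw [(hD1 x (lt_trans hl0 hx.1).ne').deriv]
      have := hgmono (Set.left_mem_Icc.2 hlb.le) ⟨hx.1.le, hx.2.le⟩ hx.1
      rw [hgl] at this
      exact this
  -- strict concavity of ψ₀ - ψl on [l,b]
  have hDH : ∀ x : ℝ, x ≠ 0 → HasDerivAt (fun t => ψ₀ t - ψl t) (Dh x) x := by
    intro x hx
    exact (hD0 x hx).sub (hD1 x hx)
  have hDH2 : ∀ x : ℝ, x ≠ 0 → HasDerivAt Dh
      (α*((m:ℝ)+2)*((m:ℝ)+3)*(x^(m+4))⁻¹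
        - (2*k/((m:ℝ)+3) + ((m:ℝ)+1)*((m:ℝ)+2)*Ak l*(x^(m+3))⁻¹)) x := by
    intro x hx
    exact (hD0' x hx).sub (hD2 x hx)
  have hconc : StrictConcaveOn ℝ (Set.Icc l b) (fun t => ψ₀ t - ψl t) := by
    apply strictConcaveOn_of_deriv2_neg (convex_Icc l b)
    · intro x hx
      exact ((hDH x (hne0 x hx)).differentiableAt.continuousAt).continuousWithinAt
    · rw [interior_Icc]
      intro x hx
      have hx0 : (0:ℝ) < x := lt_trans hl0 hx.1
      have e1 : deriv (fun t => ψ₀ t - ψl t) =ᶠ[nhds x] Dh := by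
        filter_upwards [eventually_ne_nhds hx0.ne'] with y hy
        exact (hDH y hy).deriv
      show deriv (deriv (fun t => ψ₀ t - ψl t)) x < 0
      rw [e1.deriv_eq, (hDH2 x hx0.ne').deriv]
      have h1 : α*((m:ℝ)+2)*((m:ℝ)+3)*(x^(m+4))⁻¹ < 0 := by
        apply mul_neg_of_neg_of_pos
        apply mul_neg_of_neg_of_pos (mul_neg_of_neg_of_pos hαneg (by positivity)) (by positivity)
        positivity
      have h2 : 0 ≤ 2*k/((m:ℝ)+3) := by positivity
      have h3 : 0 ≤ ((m:ℝ)+1)*((m:ℝ)+2)*Ak l*(x^(m+3))⁻¹ := by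
        apply le_of_lt
        apply mul_pos (mul_pos (mul_pos (by positivity) (by positivity)) hApos)
        positivity
      linarith
  -- comparison on (l,b)
  have hcomp : ∀ τ ∈ Set.Ioo l b, 0 < ψ₀ τ - ψl τ := by
    intro τ hτ
    obtain ⟨hτl, hτb⟩ := hτ
    have hbl : (0:ℝ) < b - l := by linarith
    have hp1 : (0:ℝ) < (b - τ)/(b - l) := div_pos (by linarith) hbl
    have hp2 : (0:ℝ) < (τ - l)/(b - l) := by
      apply div_pos (by linarith) hbl
    have hsum : (b - τ)/(b - l) + (τ - l)/(b - l) = 1 := by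
      field_simp
      ring
    have key := hconc.2 (Set.left_mem_Icc.2 hlb.le) (Set.right_mem_Icc.2 hlb.le)
      (ne_of_lt hlb) hp1 hp2 hsum
    simp only [smul_eq_mul] at key
    have hcomb : (b - τ)/(b - l) * l + (τ - l)/(b - l) * b = τ := by
      field_simp
      ring
    rw [hcomb] at key
    have hFl : 0 < ψ₀ l - ψl l := by
      have := hψ₀gt1 l hl1
      rw [hψll]
      linarith
    have hFb : ψ₀ b - ψl b = 0 := by rw [hψ₀b, hψlb]; ring
    rw [hFb] at key
    nlinarith
  -- main interior statement
  have hmain : ∀ τ ∈ Set.Ioo (1:ℝ) b, 1 ≤ σ τ ∧ σ τ < ψ₀ τ ∧ ψ₀ τ < a := by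
    intro τ hτ
    obtain ⟨hτ1, hτb⟩ := hτ
    have hτ0 : (0:ℝ) < τ := by linarith
    by_cases hcase : τ ≤ l
    · rw [hσ]
      simp only [if_pos hcase]
      exact ⟨le_refl 1, hψ₀gt1 τ hτ1, hψ₀lta τ hτ0 hτb⟩
    · rw [hσ]
      simp only [if_neg hcase]
      push_neg at hcase
      have h1 : 1 < ψl τ := by
        have := hmono (Set.left_mem_Icc.2 hlb.le) ⟨hcase.le, hτb.le⟩ hcase
        rw [hψll] at this
        exact this
      have h2 := hcomp τ ⟨hcase, hτb⟩
      exact ⟨h1.le, by linarith, hψ₀lta τ hτ0 hτb⟩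
  refine ⟨hmain, ?_⟩
  intro τ hτ
  rcases eq_or_lt_of_le hτ.1 with h1 | h1
  · rw [← h1, hσ]
    simp only [if_pos hl1.le]
    rw [hψ₀1]
  · rcases eq_or_lt_of_le hτ.2 with h2 | h2
    · rw [h2, hσ]
      simp only [if_neg (not_le.2 hlb)]
      rw [hψlb, hψ₀b]
    · exact ((hmain τ ⟨h1, h2⟩).2.1).le
end

section
/- Comparison principle along the modified J-flow ODE: let T > 0 and let Q: [1,a] → ℝ be continuous with Q ≥ 0 and Q(x) > 0 for all x ∈ (1,a). Let ψ: [1,b] × [0,T] → [1,a] be continuous, twice continuously differentiable in τ and continuously differentiable in t on (1,b) × (0,T], strictly increasing in τ for each fixed t, with ψ(1,t) = 1 and ψ(b,t) = a for every t, and satisfying the flow equation ∂ψ/∂t(τ,t) = Q(ψ(τ,t)) · P[ψ(·,t)](τ) on (1,b) × (0,T]. If ψ(τ,0) ≥ σ(τ) for all τ ∈ [1,b], then ψ(τ,t) ≥ σ(τ) for all (τ,t) ∈ [1,b] × [0,T]. -/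
open Set Filter Topology

section helpers

lemma deriv_nonpos_of_min_left {G : ℝ → ℝ} {t₀ c : ℝ} (ht₀ : 0 < t₀)
    (hmin : ∀ t ∈ Set.Icc 0 t₀, G t₀ ≤ G t) (hd : HasDerivAt G c t₀) : c ≤ 0 := by
  have hs : Tendsto (slope G t₀) (𝓝[≠] t₀) (𝓝 c) :=
    hasDerivAt_iff_tendsto_slope.mp hd
  have hs' : Tendsto (slope G t₀) (𝓝[<] t₀) (𝓝 c) :=
    hs.mono_left (nhdsWithin_mono _ (fun y hy => ne_of_lt hy))
  refine le_of_tendsto hs' ?_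
  filter_upwards [Ioo_mem_nhdsLT ht₀] with t ht
  have h1 : G t₀ ≤ G t := hmin t ⟨ht.1.le, ht.2.le⟩
  rw [slope_def_field]
  apply div_nonpos_of_nonneg_of_nonpos <;> linarith [ht.2]

lemma second_deriv_nonneg_of_isLocalMin {f f' : ℝ → ℝ} {x c : ℝ}
    (hmin : IsLocalMin f x)
    (hf' : ∀ᶠ y in 𝓝 x, HasDerivAt f (f' y) y)
    (hf'' : HasDerivAt f' c x) : 0 ≤ c := by
  by_contra hc
  push_neg at hc
  have hfx0 : f' x = 0 := hmin.hasDerivAt_eq_zero hf'.self_of_nhds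
  have hs : Tendsto (slope f' x) (𝓝[≠] x) (𝓝 c) :=
    hasDerivAt_iff_tendsto_slope.mp hf''
  have hs' : Tendsto (slope f' x) (𝓝[>] x) (𝓝 c) :=
    hs.mono_left (nhdsWithin_mono _ (fun y hy => ne_of_gt hy))
  have hev : ∀ᶠ y in 𝓝[>] x, slope f' x y < 0 := hs'.eventually_lt_const hc
  obtain ⟨u, hu, hIoo⟩ := (nhdsGT_basis x).eventually_iff.mp hev
  obtain ⟨δ, hδ, hball⟩ := Metric.eventually_nhds_iff.mp (hmin.and hf')
  set z := min ((x+u)/2) (x + δ/2) with hz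
  have hxz : x < z := by
    apply lt_min <;> [linarith; linarith]
  have hzu : z < u := by
    have : z ≤ (x+u)/2 := min_le_left _ _
    linarith
  have hzδ : ∀ y ∈ Set.Icc x z, dist y x < δ := by
    intro y hy
    have hzle : z ≤ x + δ/2 := min_le_right _ _
    rw [Real.dist_eq, abs_lt]
    constructor <;> [linarith [hy.1]; linarith [hy.2]]
  have hanti : StrictAntiOn f (Set.Icc x z) := by
    apply strictAntiOn_of_deriv_neg (convex_Icc x z)
    · intro y hy
      exact ((hball (hzδ y hy)).2.differentiableAt.continuousAt).continuousWithinAt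
    · intro y hy
      rw [interior_Icc] at hy
      have hd := (hball (hzδ y ⟨hy.1.le, hy.2.le⟩)).2
      rw [hd.deriv]
      have hsl := hIoo ⟨hy.1, lt_of_lt_of_le hy.2 hzu.le⟩
      rw [slope_def_field, hfx0] at hsl
      have hyx : 0 < y - x := by linarith [hy.1]
      have h2 := mul_neg_of_neg_of_pos hsl hyx
      rwa [sub_zero, div_mul_cancel₀ _ (ne_of_gt hyx)] at h2
  have h3 : f z < f x := hanti (Set.left_mem_Icc.mpr hxz.le) (Set.right_mem_Icc.mpr hxz.le) hxz
  have h4 : f x ≤ f z := (hball (hzδ z (Set.right_mem_Icc.mpr hxz.le))).1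
  linarith

lemma psil_hasDeriv (m : ℕ) (k C A : ℝ) {τ : ℝ} (hτ : τ ≠ 0) :
    HasDerivAt (fun τ : ℝ => k * τ ^ 2 / ((m:ℝ) + 2 + 1) + (C / ((m:ℝ)+2)) * τ + A / τ ^ (m+1))
      (2*k*τ/((m:ℝ)+2+1) + C/((m:ℝ)+2) - ((m:ℝ)+1)*A/τ^(m+2)) τ := by
  have h1 : HasDerivAt (fun τ : ℝ => k * τ ^ 2 / ((m:ℝ) + 2 + 1)) (k * (2 * τ) / ((m:ℝ)+2+1)) τ := by
    simpa using ((hasDerivAt_pow 2 τ).const_mul k).div_const ((m:ℝ)+2+1)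
  have h2 : HasDerivAt (fun τ : ℝ => (C / ((m:ℝ)+2)) * τ) (C / ((m:ℝ)+2)) τ := by
    simpa using (hasDerivAt_id τ).const_mul (C / ((m:ℝ)+2))
  have h3 : HasDerivAt (fun τ : ℝ => A / τ ^ (m+1))
      ((0 * τ ^ (m+1) - A * (((m:ℝ)+1) * τ ^ m)) / (τ ^ (m+1))^2) τ := by
    have := (hasDerivAt_const τ A).div (hasDerivAt_pow (m+1) τ) (pow_ne_zero (m+1) hτ)
    exact this.congr_deriv (by simp)
  refine ((h1.add h2).add h3).congr_deriv ?_
  have hpz : (τ:ℝ) ^ (m+1) ≠ 0 := pow_ne_zero _ hτ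
  field_simp
  ring

lemma psil_hasDeriv2 (m : ℕ) (k C A : ℝ) {τ : ℝ} (hτ : τ ≠ 0) :
    HasDerivAt (fun τ : ℝ => 2*k*τ/((m:ℝ)+2+1) + C/((m:ℝ)+2) - ((m:ℝ)+1)*A/τ^(m+2))
      (2*k/((m:ℝ)+2+1) + ((m:ℝ)+2)*((m:ℝ)+1)*A/τ^(m+3)) τ := by
  have h1 : HasDerivAt (fun τ : ℝ => 2*k*τ/((m:ℝ)+2+1)) (2*k/((m:ℝ)+2+1)) τ := by
    have := ((hasDerivAt_id τ).const_mul (2*k)).div_const ((m:ℝ)+2+1)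
    simpa using this
  have h2 : HasDerivAt (fun _ : ℝ => C/((m:ℝ)+2)) 0 τ := hasDerivAt_const _ _
  have h3 : HasDerivAt (fun τ : ℝ => ((m:ℝ)+1)*A / τ ^ (m+2))
      ((0 * τ ^ (m+2) - ((m:ℝ)+1)*A * (((m:ℝ)+2) * τ ^ (m+1))) / (τ ^ (m+2))^2) τ := by
    have := (hasDerivAt_const τ (((m:ℝ)+1)*A)).div (hasDerivAt_pow (m+2) τ) (pow_ne_zero (m+2) hτ)
    exact this.congr_deriv (by simp)
  refine ((h1.add h2).sub h3).congr_deriv ?_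
  have hpz : (τ:ℝ) ^ (m+2) ≠ 0 := pow_ne_zero _ hτ
  field_simp
  ring

lemma psil_identity (m : ℕ) (k C A : ℝ) {τ : ℝ} (hτ : τ ≠ 0) :
    (2*k/((m:ℝ)+2+1) + ((m:ℝ)+2)*((m:ℝ)+1)*A/τ^(m+3))
    + ((m:ℝ)+1) * (2*k*τ/((m:ℝ)+2+1) + C/((m:ℝ)+2) - ((m:ℝ)+1)*A/τ^(m+2)) / τ
    - ((m:ℝ)+1) * (k * τ ^ 2 / ((m:ℝ)+2+1) + (C / ((m:ℝ)+2)) * τ + A / τ ^ (m+1)) / τ^2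
    - k = 0 := by
  have hm2 : ((m:ℝ)+2) ≠ 0 := by positivity
  have hm3 : ((m:ℝ)+2+1) ≠ 0 := by positivity
  field_simp
  ring

lemma psil_boundary (m : ℕ) (k a b l C A : ℝ) (hl0 : 0 < l) (hlb : l < b)
    (hC : C = ((m:ℝ)+2)*(a*b^(m+1) - l^(m+1))/(b^(m+2)-l^(m+2))
      - (((m:ℝ)+2)*k/((m:ℝ)+2+1))*(b^(m+3)-l^(m+3))/(b^(m+2)-l^(m+2)))
    (hA : A = l^(m+1)*((m:ℝ)+2+1 - k*l^2)/((m:ℝ)+2+1) - l^(m+2)*C/((m:ℝ)+2)) :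
    k*l^2/((m:ℝ)+2+1) + (C/((m:ℝ)+2))*l + A/l^(m+1) = 1 ∧
    k*b^2/((m:ℝ)+2+1) + (C/((m:ℝ)+2))*b + A/b^(m+1) = a := by
  have hb0 : 0 < b := hl0.trans hlb
  have hd : b^(m+2) - l^(m+2) ≠ 0 := by
    have := pow_lt_pow_left₀ hlb hl0.le (n := m+2) (by omega)
    linarith
  have hm2 : ((m:ℝ)+2) ≠ 0 := by positivity
  have hm3 : ((m:ℝ)+2+1) ≠ 0 := by positivity
  have hl1 : l^(m+1) ≠ 0 := pow_ne_zero _ hl0.ne'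
  have hb1 : b^(m+1) ≠ 0 := pow_ne_zero _ hb0.ne'
  subst hA hC
  constructor
  · field_simp
    ring
  · field_simp
    ring

end helpers

/-- Comparison principle along the modified `J`-flow ODE: if the flow profile
`ψ(τ,t)` starts above the limit profile `σ`, it stays above `σ` for all times `t ∈ [0,T]`. -/
theorem modified_J_flow_comparison_principle
    (n : ℕ) (hn : 2 ≤ n) (a b k : ℝ) (ha : 1 < a) (hb : 1 < b) (hk : 0 ≤ k)
    (c ck : ℝ)
    (hc : c = n * (a * b ^ (n - 1) - 1) / (b ^ n - 1))
    (hck : ck = c - (n * k / (n + 1)) * (b ^ (n + 1) - 1) / (b ^ n - 1))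
    (h0 : 0 < ck + k) (h1 : ck + k < (n : ℝ) - 1)
    (Ck Ak : ℝ → ℝ)
    (hCk : ∀ s, Ck s = n * (a * b ^ (n - 1) - s ^ (n - 1)) / (b ^ n - s ^ n)
      - (n * k / (n + 1)) * (b ^ (n + 1) - s ^ (n + 1)) / (b ^ n - s ^ n))
    (hAk : ∀ s, Ak s = s ^ (n - 1) * ((n : ℝ) + 1 - k * s ^ 2) / (n + 1)
      - s ^ n * Ck s / n)
    (l : ℝ) (hl : l ∈ Set.Ioo (1 : ℝ) b)
    (hlam : Ck l + k * l = ((n : ℝ) - 1) / l)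
    (ψl : ℝ → ℝ)
    (hψl : ψl = fun τ => k * τ ^ 2 / (n + 1) + (Ck l / n) * τ + Ak l / τ ^ (n - 1))
    (σ : ℝ → ℝ)
    (hσ : σ = fun τ => if τ ≤ l then 1 else ψl τ)
    (T : ℝ) (hT : 0 < T)
    (Q : ℝ → ℝ) (hQcont : ContinuousOn Q (Set.Icc 1 a))
    (hQnonneg : ∀ x ∈ Set.Icc (1 : ℝ) a, 0 ≤ Q x)
    (hQpos : ∀ x ∈ Set.Ioo (1 : ℝ) a, 0 < Q x)
    (ψ : ℝ → ℝ → ℝ)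
    (hmaps : ∀ τ ∈ Set.Icc (1 : ℝ) b, ∀ t ∈ Set.Icc (0 : ℝ) T, ψ τ t ∈ Set.Icc (1 : ℝ) a)
    (hcont : ContinuousOn (fun p : ℝ × ℝ => ψ p.1 p.2) (Set.Icc 1 b ×ˢ Set.Icc 0 T))
    (hreg : ∀ t ∈ Set.Ioc (0 : ℝ) T, ContDiffOn ℝ 2 (fun τ => ψ τ t) (Set.Ioo 1 b))
    (hmono : ∀ t ∈ Set.Icc (0 : ℝ) T, StrictMonoOn (fun τ => ψ τ t) (Set.Icc 1 b))
    (hbd1 : ∀ t ∈ Set.Icc (0 : ℝ) T, ψ 1 t = 1)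
    (hbd2 : ∀ t ∈ Set.Icc (0 : ℝ) T, ψ b t = a)
    (hflow : ∀ τ ∈ Set.Ioo (1 : ℝ) b, ∀ t ∈ Set.Ioc (0 : ℝ) T,
      HasDerivAt (fun t' => ψ τ t')
        (Q (ψ τ t) * (deriv (deriv (fun x => ψ x t)) τ
          + ((n : ℝ) - 1) * deriv (fun x => ψ x t) τ / τ
          - ((n : ℝ) - 1) * ψ τ t / τ ^ 2 - k)) t)
    (hinit : ∀ τ ∈ Set.Icc (1 : ℝ) b, σ τ ≤ ψ τ 0) :
    ∀ τ ∈ Set.Icc (1 : ℝ) b, ∀ t ∈ Set.Icc (0 : ℝ) T, σ τ ≤ ψ τ t := by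
  obtain ⟨m, rfl⟩ : ∃ m, n = m + 2 := ⟨n - 2, by omega⟩
  clear hn hc hck h0 h1 hlam hmono hbd1 hQpos hQcont
  obtain ⟨hl1, hlb⟩ := hl
  have hl0 : (0:ℝ) < l := by linarith
  have hb0 : (0:ℝ) < b := by linarith
  -- normalized formulas
  have hC : Ck l = ((m:ℝ)+2)*(a*b^(m+1) - l^(m+1))/(b^(m+2)-l^(m+2))
      - (((m:ℝ)+2)*k/((m:ℝ)+2+1))*(b^(m+3)-l^(m+3))/(b^(m+2)-l^(m+2)) := by
    have h := hCk l
    simp only [show m+2-1 = m+1 from rfl, show m+2+1 = m+3 from rfl] at h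
    push_cast at h
    convert h using 2 <;> ring
  have hA : Ak l = l^(m+1)*((m:ℝ)+2+1 - k*l^2)/((m:ℝ)+2+1) - l^(m+2)*(Ck l)/((m:ℝ)+2) := by
    have h := hAk l
    simp only [show m+2-1 = m+1 from rfl] at h
    push_cast at h
    convert h using 2 <;> ring
  have hψfun : ψl = fun τ : ℝ =>
      k * τ ^ 2 / ((m:ℝ)+2+1) + (Ck l / ((m:ℝ)+2)) * τ + Ak l / τ ^ (m+1) := by
    rw [hψl]
    funext τ
    simp only [show m+2-1 = m+1 from rfl]
    push_cast
    ring
  have hbound := psil_boundary m k a b l (Ck l) (Ak l) hl0 hlb hC hA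
  have hψl_l : ψl l = 1 := by rw [hψfun]; exact hbound.1
  have hψl_b : ψl b = a := by rw [hψfun]; exact hbound.2
  -- derivative facts for ψl
  have hD1 : ∀ {τ : ℝ}, τ ≠ 0 → HasDerivAt ψl
      (2*k*τ/((m:ℝ)+2+1) + Ck l/((m:ℝ)+2) - ((m:ℝ)+1)*(Ak l)/τ^(m+2)) τ := by
    intro τ hτ
    rw [hψfun]
    exact psil_hasDeriv m k (Ck l) (Ak l) hτ
  -- continuity of ψl on [l,b]
  have hψl_cont : ContinuousOn ψl (Set.Icc l b) := by
    rw [hψfun]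
    apply ContinuousOn.add
    apply ContinuousOn.add
    · fun_prop
    · fun_prop
    · exact continuousOn_const.div (by fun_prop)
        (fun τ hτ => pow_ne_zero _ (lt_of_lt_of_le hl0 hτ.1).ne')
  -- main claim
  have key : ∀ ε > 0, ∀ p ∈ Set.Icc l b ×ˢ Set.Icc (0:ℝ) T,
      0 ≤ ψ p.1 p.2 - ψl p.1 + ε * p.2 := by
    intro ε hε
    by_contra hcon
    push_neg at hcon
    obtain ⟨p, hpD, hpneg⟩ := hcon
    set w : ℝ × ℝ → ℝ := fun q => ψ q.1 q.2 - ψl q.1 + ε * q.2 with hwdef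
    have hDsub : Set.Icc l b ×ˢ Set.Icc (0:ℝ) T ⊆ Set.Icc 1 b ×ˢ Set.Icc (0:ℝ) T :=
      Set.prod_mono (Set.Icc_subset_Icc_left hl1.le) subset_rfl
    have hwcont : ContinuousOn w (Set.Icc l b ×ˢ Set.Icc (0:ℝ) T) := by
      apply ContinuousOn.add
      apply ContinuousOn.sub
      · exact hcont.mono hDsub
      · exact hψl_cont.comp continuous_fst.continuousOn (fun q hq => hq.1)
      · fun_prop
    have hcomp : IsCompact (Set.Icc l b ×ˢ Set.Icc (0:ℝ) T) :=
      isCompact_Icc.prod isCompact_Icc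
    obtain ⟨q0, hq0D, hq0min⟩ := hcomp.exists_isMinOn ⟨p, hpD⟩ hwcont
    obtain ⟨⟨hq1l, hq1b⟩, hq20, hq2T⟩ := Set.mem_prod.mp hq0D
    have hneg : w q0 < 0 := lt_of_le_of_lt (hq0min hpD) hpneg
    have hq01 : (1:ℝ) ≤ q0.1 := le_trans hl1.le hq1l
    -- q0.1 ≠ l
    have hτ₀l : l < q0.1 := by
      rcases lt_or_eq_of_le hq1l with h | h
      · exact h
      · exfalso
        have h1 : (1:ℝ) ≤ ψ q0.1 q0.2 := (hmaps q0.1 ⟨hq01, hq1b⟩ q0.2 ⟨hq20, hq2T⟩).1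
        have h2 : ψl q0.1 = 1 := by rw [← h, hψl_l]
        have h3 : 0 ≤ ε * q0.2 := mul_nonneg hε.le hq20
        have hneg' : ψ q0.1 q0.2 - ψl q0.1 + ε * q0.2 < 0 := hneg
        linarith
    -- q0.1 ≠ b
    have hτ₀b : q0.1 < b := by
      rcases lt_or_eq_of_le hq1b with h | h
      · exact h
      · exfalso
        have h2 : ψ q0.1 q0.2 = a := by rw [h]; exact hbd2 q0.2 ⟨hq20, hq2T⟩
        have h3 : 0 ≤ ε * q0.2 := mul_nonneg hε.le hq20
        have hneg' : ψ q0.1 q0.2 - ψl q0.1 + ε * q0.2 < 0 := hneg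
        rw [h] at hneg'
        rw [h] at h2
        linarith [hψl_b, h2, hneg']
    -- q0.2 ≠ 0
    have ht₀0 : 0 < q0.2 := by
      rcases lt_or_eq_of_le hq20 with h | h
      · exact h
      · exfalso
        have h1 : σ q0.1 ≤ ψ q0.1 0 := hinit q0.1 ⟨hq01, hq1b⟩
        have h2 : σ q0.1 = ψl q0.1 := by rw [hσ]; simp [not_le.mpr hτ₀l]
        have hneg' : ψ q0.1 q0.2 - ψl q0.1 + ε * q0.2 < 0 := hneg
        rw [← h, mul_zero] at hneg'
        rw [h2] at h1
        linarith
    have hτ₀mem : q0.1 ∈ Set.Ioo (1:ℝ) b := ⟨lt_of_lt_of_le hl1 hq1l, hτ₀b⟩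
    have hτ₀pos : (0:ℝ) < q0.1 := by linarith
    have hτ₀ne : q0.1 ≠ 0 := hτ₀pos.ne'
    -- regularity in τ at time q0.2
    have hf2 : ContDiffOn ℝ 2 (fun τ => ψ τ q0.2) (Set.Ioo 1 b) := hreg q0.2 ⟨ht₀0, hq2T⟩
    have hg1 : ContDiffOn ℝ 1 (deriv (fun τ => ψ τ q0.2)) (Set.Ioo 1 b) :=
      hf2.deriv_of_isOpen isOpen_Ioo (by norm_num)
    have hfd : ∀ y ∈ Set.Ioo (1:ℝ) b,
        HasDerivAt (fun τ => ψ τ q0.2) (deriv (fun τ => ψ τ q0.2) y) y := fun y hy =>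
      ((hf2.differentiableOn (by norm_num)).differentiableAt
        (isOpen_Ioo.mem_nhds hy)).hasDerivAt
    have hgd : HasDerivAt (deriv (fun τ => ψ τ q0.2))
        (deriv (deriv (fun τ => ψ τ q0.2)) q0.1) q0.1 :=
      ((hg1.differentiableOn (by norm_num)).differentiableAt
        (isOpen_Ioo.mem_nhds hτ₀mem)).hasDerivAt
    -- local min in τ
    have hloc : IsLocalMin (fun τ => ψ τ q0.2 - ψl τ) q0.1 := by
      filter_upwards [Icc_mem_nhds hτ₀l hτ₀b] with τ hτ
      have hmem : (τ, q0.2) ∈ Set.Icc l b ×ˢ Set.Icc (0:ℝ) T := ⟨hτ, hq20, hq2T⟩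
      have h5 : ψ q0.1 q0.2 - ψl q0.1 + ε * q0.2 ≤ ψ τ q0.2 - ψl τ + ε * q0.2 :=
        hq0min hmem
      show ψ q0.1 q0.2 - ψl q0.1 ≤ ψ τ q0.2 - ψl τ
      linarith
    -- first derivative zero
    have hd1 : HasDerivAt (fun τ => ψ τ q0.2 - ψl τ)
        (deriv (fun τ => ψ τ q0.2) q0.1 -
          (2*k*q0.1/((m:ℝ)+2+1) + Ck l/((m:ℝ)+2) - ((m:ℝ)+1)*(Ak l)/q0.1^(m+2))) q0.1 :=
      (hfd q0.1 hτ₀mem).sub (hD1 hτ₀ne)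
    have h10 := hloc.hasDerivAt_eq_zero hd1
    -- second derivative nonneg
    have hev : ∀ᶠ y in 𝓝 q0.1, HasDerivAt (fun τ => ψ τ q0.2 - ψl τ)
        ((fun y => deriv (fun τ => ψ τ q0.2) y -
          (2*k*y/((m:ℝ)+2+1) + Ck l/((m:ℝ)+2) - ((m:ℝ)+1)*(Ak l)/y^(m+2))) y) y := by
      filter_upwards [isOpen_Ioo.mem_nhds hτ₀mem] with y hy
      exact (hfd y hy).sub (hD1 (by have : (1:ℝ) < y := hy.1; positivity))
    have hd2 : HasDerivAt (fun y => deriv (fun τ => ψ τ q0.2) y -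
        (2*k*y/((m:ℝ)+2+1) + Ck l/((m:ℝ)+2) - ((m:ℝ)+1)*(Ak l)/y^(m+2)))
        (deriv (deriv (fun τ => ψ τ q0.2)) q0.1 -
          (2*k/((m:ℝ)+2+1) + ((m:ℝ)+2)*((m:ℝ)+1)*(Ak l)/q0.1^(m+3))) q0.1 :=
      hgd.sub (psil_hasDeriv2 m k (Ck l) (Ak l) hτ₀ne)
    have h2nn := second_deriv_nonneg_of_isLocalMin hloc hev hd2
    -- flow equation at (q0.1, q0.2)
    have hflow' := hflow q0.1 hτ₀mem q0.2 ⟨ht₀0, hq2T⟩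
    have hcastm : ((m:ℝ)+2) - 1 = (m:ℝ)+1 := by ring
    -- values
    have hpmem : ψ q0.1 q0.2 ∈ Set.Icc (1:ℝ) a := hmaps q0.1 ⟨hq01, hq1b⟩ q0.2 ⟨hq20, hq2T⟩
    have hQnn : 0 ≤ Q (ψ q0.1 q0.2) := hQnonneg _ hpmem
    have hplt : ψ q0.1 q0.2 < ψl q0.1 := by
      have hneg' : ψ q0.1 q0.2 - ψl q0.1 + ε * q0.2 < 0 := hneg
      have : 0 ≤ ε * q0.2 := mul_nonneg hε.le hq20
      linarith
    -- positivity of the operator value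
    have hid := psil_identity m k (Ck l) (Ak l) hτ₀ne
    rw [show (k * q0.1 ^ 2 / ((m:ℝ)+2+1) + (Ck l / ((m:ℝ)+2)) * q0.1 + Ak l / q0.1 ^ (m+1))
        = ψl q0.1 by rw [hψfun]] at hid
    have hdiff : ((m:ℝ)+1) * ψl q0.1 / q0.1^2 - ((m:ℝ)+1) * ψ q0.1 q0.2 / q0.1^2
        = ((m:ℝ)+1) * (ψl q0.1 - ψ q0.1 q0.2) / q0.1^2 := by ring
    have hPpos : 0 < deriv (deriv (fun τ => ψ τ q0.2)) q0.1
        + (((m:ℝ)+2) - 1) * deriv (fun τ => ψ τ q0.2) q0.1 / q0.1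
        - (((m:ℝ)+2) - 1) * ψ q0.1 q0.2 / q0.1 ^ 2 - k := by
      rw [hcastm]
      have he1 : deriv (fun τ => ψ τ q0.2) q0.1
          = 2*k*q0.1/((m:ℝ)+2+1) + Ck l/((m:ℝ)+2) - ((m:ℝ)+1)*(Ak l)/q0.1^(m+2) := by
        linarith [h10]
      rw [he1]
      have hfrac : 0 < ((m:ℝ)+1) * (ψl q0.1 - ψ q0.1 q0.2) / q0.1^2 := by
        apply div_pos
        · apply mul_pos (by positivity) (by linarith)
        · positivity
      linarith [h2nn, hid, hdiff, hfrac]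
    -- time derivative is nonpositive at the min
    have hGd : HasDerivAt (fun t => ψ q0.1 t - ψl q0.1 + ε * t)
        (Q (ψ q0.1 q0.2) * (deriv (deriv (fun x => ψ x q0.2)) q0.1
          + (((m:ℝ)+2) - 1) * deriv (fun x => ψ x q0.2) q0.1 / q0.1
          - (((m:ℝ)+2) - 1) * ψ q0.1 q0.2 / q0.1 ^ 2 - k) + ε) q0.2 := by
      have h2 : HasDerivAt (fun t : ℝ => ε * t) ε q0.2 := by
        simpa using (hasDerivAt_id q0.2).const_mul ε
      have h3 := (hflow'.sub_const (ψl q0.1)).add h2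
      refine h3.congr_deriv ?_
      push_cast
      ring
    have hGmin : ∀ t ∈ Set.Icc 0 q0.2,
        (fun t => ψ q0.1 t - ψl q0.1 + ε * t) q0.2 ≤ (fun t => ψ q0.1 t - ψl q0.1 + ε * t) t := by
      intro t ht
      have hmem : (q0.1, t) ∈ Set.Icc l b ×ˢ Set.Icc (0:ℝ) T :=
        ⟨⟨hq1l, hq1b⟩, ⟨ht.1, le_trans ht.2 hq2T⟩⟩
      have h5 : ψ q0.1 q0.2 - ψl q0.1 + ε * q0.2 ≤ ψ q0.1 t - ψl q0.1 + ε * t :=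
        hq0min hmem
      simpa using h5
    have hnonpos := deriv_nonpos_of_min_left ht₀0 hGmin hGd
    have hQP : 0 ≤ Q (ψ q0.1 q0.2) * (deriv (deriv (fun x => ψ x q0.2)) q0.1
          + (((m:ℝ)+2) - 1) * deriv (fun x => ψ x q0.2) q0.1 / q0.1
          - (((m:ℝ)+2) - 1) * ψ q0.1 q0.2 / q0.1 ^ 2 - k) :=
      mul_nonneg hQnn hPpos.le
    linarith
  -- conclude
  intro τ hτ t ht
  by_cases hτl : τ ≤ l
  · rw [hσ]
    simp only [if_pos hτl]
    exact (hmaps τ hτ t ht).1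
  · rw [hσ]
    simp only [if_neg hτl]
    push_neg at hτl
    have hmem : (τ, t) ∈ Set.Icc l b ×ˢ Set.Icc (0:ℝ) T := ⟨⟨hτl.le, hτ.2⟩, ht⟩
    by_contra hvn
    push_neg at hvn
    rcases eq_or_lt_of_le ht.1 with h | h
    · subst h
      have := key 1 one_pos (τ, 0) hmem
      simp only [mul_zero, add_zero] at this
      linarith
    · have hε : 0 < (ψl τ - ψ τ t) / (2 * t) := by
        apply div_pos (by linarith) (by linarith)
      have := key _ hε (τ, t) hmem
      simp only at this
      have heq : (ψl τ - ψ τ t) / (2 * t) * t = (ψl τ - ψ τ t) / 2 := by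
        field_simp
      rw [heq] at this
      linarith
end

section
/- Monotonicity in time along the modified J-flow ODE: let T > 0 and let Q: [1,a] → ℝ be continuously differentiable with Q ≥ 0, Q(1) = Q(a) = 0, and Q(x) > 0 for all x ∈ (1,a). Let ψ: [1,b] × [0,T] → [1,a] be smooth, strictly increasing in τ for each fixed t, with ψ(1,t) = 1 and ψ(b,t) = a for every t, and satisfying ∂ψ/∂t(τ,t) = Q(ψ(τ,t)) · P[ψ(·,t)](τ) on (1,b) × (0,T]. If P[ψ(·,0)](τ) ≤ 0 for all τ ∈ [1,b], then ∂ψ/∂t(τ,t) ≤ 0 for all (τ,t) ∈ [1,b] × [0,T]; that is, ψ is nonincreasing in t. -/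
open Set Filter Topology

/-- slice a HasFDerivWithinAt horizontally -/
lemma JF_slice_h {G : ℝ × ℝ → ℝ} {G' : ℝ × ℝ →L[ℝ] ℝ} {S : Set (ℝ × ℝ)} {τ t : ℝ}
    {A : Set ℝ} (hA : A ∈ 𝓝 τ) (hmaps : ∀ x ∈ A, (x, t) ∈ S)
    (hG : HasFDerivWithinAt G G' S (τ, t)) :
    HasDerivAt (fun x => G (x, t)) (G' (1, 0)) τ := by
  have hc : HasDerivWithinAt (fun x : ℝ => (x, t)) ((1 : ℝ), (0 : ℝ)) A τ :=
    ((hasDerivAt_id τ).prodMk (hasDerivAt_const τ t)).hasDerivWithinAt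
  have h := hG.comp_hasDerivWithinAt τ hc hmaps
  exact (h.hasDerivAt hA)

/-- slice a HasFDerivWithinAt vertically -/
lemma JF_slice_v {G : ℝ × ℝ → ℝ} {G' : ℝ × ℝ →L[ℝ] ℝ} {S : Set (ℝ × ℝ)} {τ t : ℝ}
    {B : Set ℝ} (hmaps : ∀ s ∈ B, (τ, s) ∈ S)
    (hG : HasFDerivWithinAt G G' S (τ, t)) :
    HasDerivWithinAt (fun s => G (τ, s)) (G' (0, 1)) B t := by
  have hc : HasDerivWithinAt (fun s : ℝ => (τ, s)) ((0 : ℝ), (1 : ℝ)) B t :=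
    ((hasDerivAt_const t τ).prodMk (hasDerivAt_id t)).hasDerivWithinAt
  exact hG.comp_hasDerivWithinAt t hc hmaps

/-- at a right endpoint which is a max, the derivative within is nonneg -/
lemma JF_endpoint {f : ℝ → ℝ} {d c t₀ : ℝ} (hc : c < t₀)
    (hf : HasDerivWithinAt f d (Set.Icc c t₀) t₀)
    (hmax : ∀ s ∈ Set.Icc c t₀, f s ≤ f t₀) : 0 ≤ d := by
  have h := hasDerivWithinAt_iff_tendsto_slope.1 hf
  rw [Set.Icc_sdiff_right] at h
  have hne : (𝓝[Set.Ico c t₀] t₀).NeBot := by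
    apply mem_closure_iff_nhdsWithin_neBot.mp
    rw [closure_Ico hc.ne]
    exact ⟨hc.le, le_rfl⟩
  refine ge_of_tendsto h ?_
  filter_upwards [self_mem_nhdsWithin] with s hs
  have h1 : f s - f t₀ ≤ 0 := sub_nonpos.2 (hmax s ⟨hs.1, hs.2.le⟩)
  have h2 : s - t₀ < 0 := sub_neg.2 hs.2
  rw [slope_def_field]
  rw [div_nonneg_iff]
  exact Or.inr ⟨h1, h2.le⟩

/-- second derivative at an interior local max is nonpositive -/
lemma JF_secondderiv {g g1 : ℝ → ℝ} {τ₀ l r d : ℝ} (hl : l < τ₀) (hr : τ₀ < r)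
    (hg : ∀ x ∈ Set.Ioo l r, HasDerivAt g (g1 x) x)
    (hg1 : HasDerivAt g1 d τ₀) (h0 : g1 τ₀ = 0)
    (hmax : ∀ x ∈ Set.Ioo l r, g x ≤ g τ₀) : d ≤ 0 := by
  by_contra hpos
  push_neg at hpos
  have hslope := hasDerivAt_iff_tendsto_slope.1 hg1
  have hmono : 𝓝[>] τ₀ ≤ 𝓝[≠] τ₀ :=
    nhdsWithin_mono τ₀ (fun x hx => ne_of_gt hx)
  have hev : ∀ᶠ x in 𝓝[>] τ₀, 0 < slope g1 τ₀ x :=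
    (hslope.mono_left hmono).eventually (eventually_gt_nhds hpos)
  have hev2 : ∀ᶠ x in 𝓝[>] τ₀, x ∈ Set.Ioo τ₀ r := by
    filter_upwards [Ioo_mem_nhdsGT_of_mem ⟨le_rfl, hr⟩] with x hx using hx
  have hev3 := hev.and hev2
  rw [eventually_nhdsWithin_iff] at hev3
  rcases (Metric.eventually_nhds_iff.mp hev3) with ⟨ε, hε, hball⟩
  set c := τ₀ + min ε (r - τ₀) / 2 with hcdef
  have hminpos : 0 < min ε (r - τ₀) := lt_min hε (sub_pos.2 hr)
  have hcgt : τ₀ < c := by rw [hcdef]; linarith [hminpos]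
  have hg1pos : ∀ x ∈ Set.Ioo τ₀ c, 0 < g1 x := by
    intro x hx
    have hd : dist x τ₀ < ε := by
      rw [Real.dist_eq, abs_of_pos (sub_pos.2 hx.1)]
      have : x - τ₀ < min ε (r - τ₀) / 2 := by
        have := hx.2; rw [hcdef] at this; linarith
      calc x - τ₀ < min ε (r - τ₀) / 2 := this
        _ ≤ ε / 2 := by gcongr; exact min_le_left _ _
        _ < ε := by linarith
    have hx' : x ∈ Set.Ioi τ₀ := hx.1
    have := (hball hd) hx'
    have hsl := this.1
    have hxt : 0 < x - τ₀ := sub_pos.2 hx.1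
    have : slope g1 τ₀ x = g1 x / (x - τ₀) := by
      rw [slope_def_field, h0]
      ring_nf
    rw [this] at hsl
    have := mul_pos hsl hxt
    rwa [div_mul_cancel₀ _ hxt.ne'] at this
  have hIoosub : Set.Ioo τ₀ c ⊆ Set.Ioo l r := by
    intro x hx
    refine ⟨lt_trans hl hx.1, ?_⟩
    have hd : dist x τ₀ < ε := by
      rw [Real.dist_eq, abs_of_pos (sub_pos.2 hx.1)]
      have : x - τ₀ < min ε (r - τ₀) / 2 := by
        have := hx.2; rw [hcdef] at this; linarith
      calc x - τ₀ < min ε (r - τ₀) / 2 := this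
        _ ≤ ε / 2 := by gcongr; exact min_le_left _ _
        _ < ε := by linarith
    exact ((hball hd) hx.1).2.2
  set x₁ := (τ₀ + c) / 2 with hx₁def
  have hx₁mem : x₁ ∈ Set.Ioo τ₀ c := ⟨by rw [hx₁def]; linarith, by rw [hx₁def]; linarith⟩
  have hstrict : StrictMonoOn g (Set.Icc τ₀ x₁) := by
    apply strictMonoOn_of_deriv_pos (convex_Icc _ _)
    · intro x hx
      have hxm : x ∈ Set.Ioo l r := by
        rcases eq_or_lt_of_le hx.1 with h | h
        · exact ⟨by rw [← h]; exact hl, by rw [← h]; exact hr⟩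
        · exact hIoosub ⟨h, lt_of_le_of_lt hx.2 hx₁mem.2⟩
      exact ((hg x hxm).continuousAt).continuousWithinAt
    · intro x hx
      rw [interior_Icc] at hx
      have hxm : x ∈ Set.Ioo τ₀ c := ⟨hx.1, lt_trans hx.2 hx₁mem.2⟩
      rw [(hg x (hIoosub hxm)).deriv]
      exact hg1pos x hxm
  have hlt : g τ₀ < g x₁ :=
    hstrict ⟨le_rfl, hx₁mem.1.le⟩ ⟨hx₁mem.1.le, le_rfl⟩ hx₁mem.1
  exact absurd (hmax x₁ (hIoosub hx₁mem)) (not_le.2 hlt)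
set_option maxHeartbeats 4000000 in
/-- Monotonicity in time along the modified `J`-flow ODE: if `P[ψ(·,0)] ≤ 0`
on `[1,b]`, then `∂ψ/∂t ≤ 0` everywhere, i.e. `ψ` is nonincreasing in `t`. -/
theorem modified_J_flow_time_monotonicity
    (n : ℕ) (hn : 2 ≤ n) (a b k : ℝ) (ha : 1 < a) (hb : 1 < b) (hk : 0 ≤ k)
    (T : ℝ) (hT : 0 < T)
    (Q : ℝ → ℝ) (hQreg : ContDiffOn ℝ 1 Q (Set.Icc 1 a))
    (hQ1 : Q 1 = 0) (hQa : Q a = 0)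
    (hQnonneg : ∀ x ∈ Set.Icc (1 : ℝ) a, 0 ≤ Q x)
    (hQpos : ∀ x ∈ Set.Ioo (1 : ℝ) a, 0 < Q x)
    (ψ : ℝ → ℝ → ℝ)
    (hmaps : ∀ τ ∈ Set.Icc (1 : ℝ) b, ∀ t ∈ Set.Icc (0 : ℝ) T, ψ τ t ∈ Set.Icc (1 : ℝ) a)
    (hsmooth : ContDiffOn ℝ (⊤ : ℕ∞) (fun p : ℝ × ℝ => ψ p.1 p.2) (Set.Icc 1 b ×ˢ Set.Icc 0 T))
    (hmono : ∀ t ∈ Set.Icc (0 : ℝ) T, StrictMonoOn (fun τ => ψ τ t) (Set.Icc 1 b))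
    (hbd1 : ∀ t ∈ Set.Icc (0 : ℝ) T, ψ 1 t = 1)
    (hbd2 : ∀ t ∈ Set.Icc (0 : ℝ) T, ψ b t = a)
    (hflow : ∀ τ ∈ Set.Ioo (1 : ℝ) b, ∀ t ∈ Set.Ioc (0 : ℝ) T,
      HasDerivAt (fun t' => ψ τ t')
        (Q (ψ τ t) * (deriv (deriv (fun x => ψ x t)) τ
          + ((n : ℝ) - 1) * deriv (fun x => ψ x t) τ / τ
          - ((n : ℝ) - 1) * ψ τ t / τ ^ 2 - k)) t)
    (hinit : ∀ τ ∈ Set.Icc (1 : ℝ) b,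
      deriv (deriv (fun x => ψ x 0)) τ + ((n : ℝ) - 1) * deriv (fun x => ψ x 0) τ / τ
        - ((n : ℝ) - 1) * ψ τ 0 / τ ^ 2 - k ≤ 0) :
    (∀ τ ∈ Set.Ioo (1 : ℝ) b, ∀ t ∈ Set.Ioc (0 : ℝ) T,
      Q (ψ τ t) * (deriv (deriv (fun x => ψ x t)) τ
        + ((n : ℝ) - 1) * deriv (fun x => ψ x t) τ / τ
        - ((n : ℝ) - 1) * ψ τ t / τ ^ 2 - k) ≤ 0)
    ∧ (∀ τ ∈ Set.Icc (1 : ℝ) b, AntitoneOn (fun t => ψ τ t) (Set.Icc 0 T)) := by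
  classical
  set S : Set (ℝ × ℝ) := Set.Icc 1 b ×ˢ Set.Icc 0 T with hSdef
  have hS : UniqueDiffOn ℝ S := (uniqueDiffOn_Icc hb).prod (uniqueDiffOn_Icc hT)
  set F : ℝ × ℝ → ℝ := fun p => ψ p.1 p.2 with hFdef
  have hFsm : ContDiffOn ℝ (⊤ : ℕ∞) F S := hsmooth
  set D1 := fderivWithin ℝ F S with hD1def
  set D2 := fderivWithin ℝ D1 S with hD2def
  set D3 := fderivWithin ℝ D2 S with hD3def
  have hD1sm : ContDiffOn ℝ (⊤ : ℕ∞) D1 S := hFsm.fderivWithin hS (by simp)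
  have hD2sm : ContDiffOn ℝ (⊤ : ℕ∞) D2 S := hD1sm.fderivWithin hS (by simp)
  have hdF : ∀ p ∈ S, HasFDerivWithinAt F (D1 p) S p :=
    fun p hp => (hFsm.differentiableOn (by simp) p hp).hasFDerivWithinAt
  have hdD1 : ∀ p ∈ S, HasFDerivWithinAt D1 (D2 p) S p :=
    fun p hp => (hD1sm.differentiableOn (by simp) p hp).hasFDerivWithinAt
  have hdD2 : ∀ p ∈ S, HasFDerivWithinAt D2 (D3 p) S p :=
    fun p hp => (hD2sm.differentiableOn (by simp) p hp).hasFDerivWithinAt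
  have hmemS : ∀ {x t : ℝ}, x ∈ Set.Icc 1 b → t ∈ Set.Icc 0 T → (x, t) ∈ S :=
    fun hx ht => ⟨hx, ht⟩
  set u : ℝ × ℝ → ℝ := fun p => D1 p (0, 1) with hudef
  set v1 : ℝ × ℝ → ℝ := fun p => D1 p (1, 0) with hv1def
  set v2 : ℝ × ℝ → ℝ := fun p => D2 p (1, 0) (1, 0) with hv2def
  set Pc : ℝ × ℝ → ℝ :=
    fun p => v2 p + ((n : ℝ) - 1) * v1 p / p.1 - ((n : ℝ) - 1) * F p / p.1 ^ 2 - k with hPcdef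
  -- pointwise derivatives of evaluated derivatives
  have hd1eval : ∀ (w : ℝ × ℝ), ∀ p ∈ S,
      HasFDerivWithinAt (fun q => D1 q w) ((D2 p).flip w) S p := by
    intro w p hp
    have h := (hdD1 p hp).clm_apply (hasFDerivWithinAt_const w p S)
    simpa using h
  have hd2eval : ∀ (w x : ℝ × ℝ), ∀ p ∈ S,
      HasFDerivWithinAt (fun q => D2 q w x) (((D3 p).flip w).flip x) S p := by
    intro w x p hp
    have h1 := (hdD2 p hp).clm_apply (hasFDerivWithinAt_const w p S)
    have h1' : HasFDerivWithinAt (fun q => D2 q w) ((D3 p).flip w) S p := by simpa using h1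
    have h2 := h1'.clm_apply (hasFDerivWithinAt_const x p S)
    simpa using h2
  -- symmetry of derivatives
  have hclosS : ∀ p ∈ S, p ∈ closure (interior S) := by
    intro p hp
    have hi : interior S = Set.Ioo 1 b ×ˢ Set.Ioo 0 T := by
      rw [hSdef, interior_prod_eq, interior_Icc, interior_Icc]
    rw [hi, closure_prod_eq, closure_Ioo hb.ne, closure_Ioo hT.ne]
    exact hp
  have hsymF : ∀ p ∈ S, ∀ v w, D2 p v w = D2 p w v := fun p hp v w =>
    ((hFsm p hp).isSymmSndFDerivWithinAt (by rw [minSmoothness_of_isRCLikeNormedField]; exact WithTop.coe_le_coe.2 le_top) hS (hclosS p hp) hp) v w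
  have hsymD1 : ∀ p ∈ S, ∀ v w, D3 p v w = D3 p w v := fun p hp v w =>
    ((hD1sm p hp).isSymmSndFDerivWithinAt (by rw [minSmoothness_of_isRCLikeNormedField]; exact WithTop.coe_le_coe.2 le_top) hS (hclosS p hp) hp) v w
  have hsymD2pt : ∀ p ∈ S, ∀ v w x, D3 p v w x = D3 p v x w := by
    intro p hp v w x
    have h1 := hd2eval w x p hp
    have h2 := hd2eval x w p hp
    have h3 : HasFDerivWithinAt (fun q => D2 q w x) (((D3 p).flip x).flip w) S p :=
      h2.congr (fun q hq => hsymF q hq w x) (hsymF p hp w x)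
    have heq : ((D3 p).flip w).flip x = ((D3 p).flip x).flip w :=
      UniqueDiffWithinAt.eq (hS p hp) h1 h3
    have := ContinuousLinearMap.ext_iff.1 heq v
    simpa using this
  -- bridge to the `deriv` expressions of the statement
  have hv1deriv : ∀ τ ∈ Set.Ioo (1 : ℝ) b, ∀ t ∈ Set.Icc (0 : ℝ) T,
      HasDerivAt (fun x => ψ x t) (v1 (τ, t)) τ := by
    intro τ hτ t ht
    have h := JF_slice_h (Ioo_mem_nhds hτ.1 hτ.2)
      (fun x hx => hmemS (Set.Ioo_subset_Icc_self hx) ht)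
      (hdF (τ, t) (hmemS (Set.Ioo_subset_Icc_self hτ) ht))
    exact h
  have hv2deriv : ∀ τ ∈ Set.Ioo (1 : ℝ) b, ∀ t ∈ Set.Icc (0 : ℝ) T,
      HasDerivAt (fun x => v1 (x, t)) (v2 (τ, t)) τ := by
    intro τ hτ t ht
    have h := JF_slice_h (Ioo_mem_nhds hτ.1 hτ.2)
      (fun x hx => hmemS (Set.Ioo_subset_Icc_self hx) ht)
      (hd1eval (1, 0) (τ, t) (hmemS (Set.Ioo_subset_Icc_self hτ) ht))
    simpa [hv1def, hv2def] using h
  have hPbridge : ∀ τ ∈ Set.Ioo (1 : ℝ) b, ∀ t ∈ Set.Icc (0 : ℝ) T,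
      deriv (deriv (fun x => ψ x t)) τ + ((n : ℝ) - 1) * deriv (fun x => ψ x t) τ / τ
        - ((n : ℝ) - 1) * ψ τ t / τ ^ 2 - k = Pc (τ, t) := by
    intro τ hτ t ht
    have e1 : deriv (fun x => ψ x t) τ = v1 (τ, t) := (hv1deriv τ hτ t ht).deriv
    have e2 : deriv (deriv (fun x => ψ x t)) τ = v2 (τ, t) := by
      have hev : deriv (fun x => ψ x t) =ᶠ[nhds τ] fun x => v1 (x, t) := by
        filter_upwards [Ioo_mem_nhds hτ.1 hτ.2] with x hx
        exact (hv1deriv x hx t ht).deriv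
      rw [Filter.EventuallyEq.deriv_eq hev]
      exact (hv2deriv τ hτ t ht).deriv
    rw [e1, e2, hPcdef]
  -- time slice of F
  have hut : ∀ τ ∈ Set.Icc (1 : ℝ) b, ∀ t ∈ Set.Icc (0 : ℝ) T,
      HasDerivWithinAt (fun s => ψ τ s) (u (τ, t)) (Set.Icc 0 T) t :=
    fun τ hτ t ht => JF_slice_v (fun s hs => hmemS hτ hs) (hdF (τ, t) (hmemS hτ ht))
  -- interior identity u = Q(F) * Pc
  have hDkey : ∀ τ ∈ Set.Ioo (1 : ℝ) b, ∀ t ∈ Set.Ioc (0 : ℝ) T,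
      u (τ, t) = Q (ψ τ t) * Pc (τ, t) := by
    intro τ hτ t ht
    have htI : t ∈ Set.Icc (0 : ℝ) T := ⟨ht.1.le, ht.2⟩
    have h1 := (hflow τ hτ t ht).hasDerivWithinAt (s := Set.Icc (0 : ℝ) T)
    have h2 := hut τ (Set.Ioo_subset_Icc_self hτ) t htI
    have hud := (uniqueDiffOn_Icc hT) t htI
    rw [← h2.derivWithin hud, h1.derivWithin hud, hPbridge τ hτ t htI]
  -- continuity of the pieces
  have hcontD1 : ContinuousOn D1 S := hD1sm.continuousOn
  have hcontD2 : ContinuousOn D2 S := hD2sm.continuousOn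
  have hcontu : ContinuousOn u S :=
    (ContinuousLinearMap.apply ℝ ℝ ((0 : ℝ), (1 : ℝ))).continuous.comp_continuousOn hcontD1
  have hcontv1 : ContinuousOn v1 S :=
    (ContinuousLinearMap.apply ℝ ℝ ((1 : ℝ), (0 : ℝ))).continuous.comp_continuousOn hcontD1
  have hcontv2 : ContinuousOn v2 S :=
    ((ContinuousLinearMap.apply ℝ ℝ ((1 : ℝ), (0 : ℝ))).continuous.comp
      (ContinuousLinearMap.apply ℝ (ℝ × ℝ →L[ℝ] ℝ) ((1 : ℝ), (0 : ℝ))).continuous).comp_continuousOn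
      hcontD2
  have hcontF : ContinuousOn F S := hFsm.continuousOn
  have hfst : ContinuousOn (fun p : ℝ × ℝ => p.1) S := continuous_fst.continuousOn
  have hne0 : ∀ p ∈ S, p.1 ≠ 0 := fun p hp => (lt_of_lt_of_le zero_lt_one hp.1.1).ne'
  have hcontPc : ContinuousOn Pc S := by
    rw [hPcdef]
    exact ((hcontv2.add ((continuousOn_const.mul hcontv1).div hfst hne0)).sub
      ((continuousOn_const.mul hcontF).div (hfst.pow 2)
        (fun p hp => pow_ne_zero 2 (hne0 p hp)))).sub continuousOn_const
  have hmapsP : ∀ p ∈ S, F p ∈ Set.Icc (1 : ℝ) a := fun p hp => hmaps p.1 hp.1 p.2 hp.2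
  have hcontQF : ContinuousOn (fun p => Q (F p)) S :=
    hQreg.continuousOn.comp hcontF hmapsP
  -- extend the identity to all of S by continuity
  have hkey : ∀ p ∈ S, u p = Q (F p) * Pc p := by
    intro p hp
    have hclD : p ∈ closure (Set.Ioo (1 : ℝ) b ×ˢ Set.Ioc (0 : ℝ) T) := by
      rw [closure_prod_eq, closure_Ioo hb.ne, closure_Ioc hT.ne]
      exact hp
    have hne2 : (nhdsWithin p (Set.Ioo (1 : ℝ) b ×ˢ Set.Ioc (0 : ℝ) T)).NeBot :=
      mem_closure_iff_nhdsWithin_neBot.mp hclD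
    have hsubS : (Set.Ioo (1 : ℝ) b ×ˢ Set.Ioc (0 : ℝ) T) ⊆ S :=
      Set.prod_mono Set.Ioo_subset_Icc_self Set.Ioc_subset_Icc_self
    have l1 : Filter.Tendsto u (nhdsWithin p (Set.Ioo (1 : ℝ) b ×ˢ Set.Ioc (0 : ℝ) T))
        (nhds (u p)) := (hcontu p hp).mono_left (nhdsWithin_mono p hsubS)
    have l2 : Filter.Tendsto (fun q => Q (F q) * Pc q)
        (nhdsWithin p (Set.Ioo (1 : ℝ) b ×ˢ Set.Ioc (0 : ℝ) T))
        (nhds (Q (F p) * Pc p)) :=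
      ((hcontQF.mul hcontPc) p hp).mono_left (nhdsWithin_mono p hsubS)
    have l3 : Filter.Tendsto u (nhdsWithin p (Set.Ioo (1 : ℝ) b ×ˢ Set.Ioc (0 : ℝ) T))
        (nhds (Q (F p) * Pc p)) := by
      refine l2.congr' ?_
      filter_upwards [self_mem_nhdsWithin] with q hq
      exact (hDkey q.1 hq.1 q.2 hq.2).symm
    exact tendsto_nhds_unique l1 l3
  -- boundary values of u
  have hub0 : ∀ t ∈ Set.Icc (0 : ℝ) T, u (1, t) = 0 := by
    intro t ht
    have h1 := hut 1 (Set.left_mem_Icc.2 hb.le) t ht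
    have h2 : HasDerivWithinAt (fun s => ψ 1 s) 0 (Set.Icc 0 T) t :=
      (hasDerivWithinAt_const t _ (1 : ℝ)).congr (fun s hs => hbd1 s hs) (hbd1 t ht)
    have hud := (uniqueDiffOn_Icc hT) t ht
    rw [← h1.derivWithin hud, h2.derivWithin hud]
  have hubb : ∀ t ∈ Set.Icc (0 : ℝ) T, u (b, t) = 0 := by
    intro t ht
    have h1 := hut b (Set.right_mem_Icc.2 hb.le) t ht
    have h2 : HasDerivWithinAt (fun s => ψ b s) 0 (Set.Icc 0 T) t :=
      (hasDerivWithinAt_const t _ a).congr (fun s hs => hbd2 s hs) (hbd2 t ht)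
    have hud := (uniqueDiffOn_Icc hT) t ht
    rw [← h1.derivWithin hud, h2.derivWithin hud]
  -- initial values of u
  have h0I : (0 : ℝ) ∈ Set.Icc (0 : ℝ) T := ⟨le_rfl, hT.le⟩
  have hu0 : ∀ τ ∈ Set.Icc (1 : ℝ) b, u (τ, 0) ≤ 0 := by
    intro τ hτ
    rcases eq_or_lt_of_le hτ.1 with h1 | h1
    · rw [← h1, hub0 0 h0I]
    rcases eq_or_lt_of_le hτ.2 with h2 | h2
    · rw [h2, hubb 0 h0I]
    have hτI : τ ∈ Set.Ioo (1 : ℝ) b := ⟨h1, h2⟩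
    have hp : (τ, (0 : ℝ)) ∈ S := hmemS (Set.Ioo_subset_Icc_self hτI) h0I
    rw [hkey _ hp]
    refine mul_nonpos_iff.mpr (Or.inl ⟨hQnonneg _ (hmapsP _ hp), ?_⟩)
    rw [← hPbridge τ hτI 0 h0I]
    exact hinit τ hτ
  -- bounds
  have hScomp : IsCompact S := isCompact_Icc.prod isCompact_Icc
  obtain ⟨CP, hCP⟩ := hScomp.exists_bound_of_continuousOn hcontPc
  have hQDcont : ContinuousOn (derivWithin Q (Set.Icc 1 a)) (Set.Icc 1 a) :=
    hQreg.continuousOn_derivWithin (uniqueDiffOn_Icc ha) le_rfl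
  obtain ⟨CQ, hCQ⟩ := isCompact_Icc.exists_bound_of_continuousOn hQDcont
  have hSmem1 : ((1 : ℝ), (0 : ℝ)) ∈ S := hmemS (Set.left_mem_Icc.2 hb.le) h0I
  have hCP0 : 0 ≤ CP := le_trans (norm_nonneg _) (hCP _ hSmem1)
  have hCQ0 : 0 ≤ CQ := le_trans (norm_nonneg _) (hCQ 1 (Set.left_mem_Icc.2 ha.le))
  set lam : ℝ := CQ * CP + 1 with hlamdef
  -- the maximum principle
  have key : ∀ p ∈ S, u p ≤ 0 := by
    by_contra hcon
    push_neg at hcon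
    obtain ⟨q, hqS, hqpos⟩ := hcon
    have hcontw : ContinuousOn (fun p : ℝ × ℝ => Real.exp (-(lam * p.2)) * u p) S :=
      ((Real.continuous_exp.comp
        (continuous_const.mul continuous_snd).neg).continuousOn).mul hcontu
    obtain ⟨p₀, hp₀S, hp₀max⟩ := hScomp.exists_isMaxOn ⟨q, hqS⟩ hcontw
    have hmaxle : ∀ p ∈ S, Real.exp (-(lam * p.2)) * u p ≤ Real.exp (-(lam * p₀.2)) * u p₀ :=
      fun p hp => hp₀max hp
    obtain ⟨τ₀, t₀⟩ := p₀
    have hp₀ : (τ₀, t₀) ∈ S := hp₀S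
    have hτ₀I : τ₀ ∈ Set.Icc (1 : ℝ) b := hp₀.1
    have ht₀I : t₀ ∈ Set.Icc (0 : ℝ) T := hp₀.2
    have hwpos : 0 < Real.exp (-(lam * t₀)) * u (τ₀, t₀) :=
      lt_of_lt_of_le (mul_pos (Real.exp_pos _) hqpos) (hmaxle q hqS)
    have hExpPos : (0 : ℝ) < Real.exp (-(lam * t₀)) := Real.exp_pos _
    have hupos : 0 < u (τ₀, t₀) := by
      by_contra h
      push_neg at h
      nlinarith
    have hτ₀ : τ₀ ∈ Set.Ioo (1 : ℝ) b := by
      constructor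
      · rcases eq_or_lt_of_le hτ₀I.1 with h | h
        · exfalso; rw [← h, hub0 t₀ ht₀I] at hupos; exact lt_irrefl _ hupos
        · exact h
      · rcases eq_or_lt_of_le hτ₀I.2 with h | h
        · exfalso; rw [h, hubb t₀ ht₀I] at hupos; exact lt_irrefl _ hupos
        · exact h
    have ht₀ : t₀ ∈ Set.Ioc (0 : ℝ) T := by
      rcases eq_or_lt_of_le ht₀I.1 with h | h
      · exfalso
        have := hu0 τ₀ hτ₀I
        rw [← h] at hupos
        exact absurd this (not_le.2 hupos)
      · exact ⟨h, ht₀I.2⟩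
    -- time derivative at the max point is ≥ λ u
    have hutd : HasDerivWithinAt (fun s => u (τ₀, s)) (D2 (τ₀, t₀) (0, 1) (0, 1))
        (Set.Icc 0 T) t₀ := by
      have h := JF_slice_v (fun s hs => hmemS hτ₀I hs) (hd1eval (0, 1) (τ₀, t₀) hp₀)
      simpa [hudef] using h
    have hexp : HasDerivAt (fun s : ℝ => Real.exp (-(lam * s)))
        (Real.exp (-(lam * t₀)) * (-lam)) t₀ := by
      have h1 : HasDerivAt (fun s : ℝ => -(lam * s)) (-lam) t₀ := by
        simpa using ((hasDerivAt_id t₀).const_mul lam).fun_neg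
      exact h1.exp
    have hwt : HasDerivWithinAt (fun s => Real.exp (-(lam * s)) * u (τ₀, s))
        (Real.exp (-(lam * t₀)) * (-lam) * u (τ₀, t₀)
          + Real.exp (-(lam * t₀)) * (D2 (τ₀, t₀) (0, 1) (0, 1)))
        (Set.Icc 0 t₀) t₀ :=
      (hexp.hasDerivWithinAt).mul (hutd.mono (Set.Icc_subset_Icc_right ht₀I.2))
    have hge := JF_endpoint ht₀.1 hwt
      (fun s hs => hmaxle (τ₀, s) (hmemS hτ₀I ⟨hs.1, le_trans hs.2 ht₀I.2⟩))
    have hlamu : lam * u (τ₀, t₀) ≤ D2 (τ₀, t₀) (0, 1) (0, 1) := by nlinarith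
    -- spatial derivatives at the max point
    have hgd : ∀ x ∈ Set.Ioo (1 : ℝ) b,
        HasDerivAt (fun y => u (y, t₀)) (D2 (x, t₀) (1, 0) (0, 1)) x := by
      intro x hx
      have h := JF_slice_h (Ioo_mem_nhds hx.1 hx.2)
        (fun y hy => hmemS (Set.Ioo_subset_Icc_self hy) ht₀I)
        (hd1eval (0, 1) (x, t₀) (hmemS (Set.Ioo_subset_Icc_self hx) ht₀I))
      simpa [hudef] using h
    have hu1d : HasDerivAt (fun y => D2 (y, t₀) (1, 0) (0, 1))
        (D3 (τ₀, t₀) (1, 0) (1, 0) (0, 1)) τ₀ := by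
      have h := JF_slice_h (Ioo_mem_nhds hτ₀.1 hτ₀.2)
        (fun y hy => hmemS (Set.Ioo_subset_Icc_self hy) ht₀I)
        (hd2eval (1, 0) (0, 1) (τ₀, t₀) hp₀)
      simpa using h
    have hgmax : ∀ x ∈ Set.Ioo (1 : ℝ) b, u (x, t₀) ≤ u (τ₀, t₀) := by
      intro x hx
      have h := hmaxle (x, t₀) (hmemS (Set.Ioo_subset_Icc_self hx) ht₀I)
      exact (mul_le_mul_iff_right₀ hExpPos).mp h
    have hu1zero : D2 (τ₀, t₀) (1, 0) (0, 1) = 0 := by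
      have hloc : IsLocalMax (fun y => u (y, t₀)) τ₀ := by
        filter_upwards [Ioo_mem_nhds hτ₀.1 hτ₀.2] with x hx using hgmax x hx
      exact hloc.hasDerivAt_eq_zero (hgd τ₀ hτ₀)
    have hu2le : D3 (τ₀, t₀) (1, 0) (1, 0) (0, 1) ≤ 0 :=
      JF_secondderiv hτ₀.1 hτ₀.2 hgd hu1d hu1zero hgmax
    -- the PDE for u at the max point
    have hud := (uniqueDiffOn_Icc hT) t₀ ht₀I
    have hψmem : F (τ₀, t₀) ∈ Set.Ioo (1 : ℝ) a := by
      have h1 : ψ 1 t₀ < ψ τ₀ t₀ :=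
        hmono t₀ ht₀I (Set.left_mem_Icc.2 hb.le) hτ₀I hτ₀.1
      have h2 : ψ τ₀ t₀ < ψ b t₀ :=
        hmono t₀ ht₀I hτ₀I (Set.right_mem_Icc.2 hb.le) hτ₀.2
      rw [hbd1 t₀ ht₀I] at h1
      rw [hbd2 t₀ ht₀I] at h2
      exact ⟨h1, h2⟩
    have hQdiff : HasDerivAt Q (derivWithin Q (Set.Icc 1 a) (F (τ₀, t₀))) (F (τ₀, t₀)) := by
      have hmem : Set.Icc (1 : ℝ) a ∈ nhds (F (τ₀, t₀)) := Icc_mem_nhds hψmem.1 hψmem.2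
      have h1 : DifferentiableAt ℝ Q (F (τ₀, t₀)) :=
        (hQreg.contDiffAt hmem).differentiableAt one_ne_zero
      rw [derivWithin_of_mem_nhds hmem]
      exact h1.hasDerivAt
    have hFv : HasDerivWithinAt (fun s => F (τ₀, s)) (u (τ₀, t₀)) (Set.Icc 0 T) t₀ :=
      JF_slice_v (fun s hs => hmemS hτ₀I hs) (hdF _ hp₀)
    have hQFv : HasDerivWithinAt (fun s => Q (F (τ₀, s)))
        (derivWithin Q (Set.Icc 1 a) (F (τ₀, t₀)) * u (τ₀, t₀)) (Set.Icc 0 T) t₀ :=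
      hQdiff.comp_hasDerivWithinAt t₀ hFv
    have hv1v : HasDerivWithinAt (fun s => v1 (τ₀, s)) (D2 (τ₀, t₀) (0, 1) (1, 0))
        (Set.Icc 0 T) t₀ := by
      have h := JF_slice_v (fun s hs => hmemS hτ₀I hs) (hd1eval (1, 0) (τ₀, t₀) hp₀)
      simpa [hv1def] using h
    have hv2v : HasDerivWithinAt (fun s => v2 (τ₀, s)) (D3 (τ₀, t₀) (0, 1) (1, 0) (1, 0))
        (Set.Icc 0 T) t₀ := by
      have h := JF_slice_v (fun s hs => hmemS hτ₀I hs) (hd2eval (1, 0) (1, 0) (τ₀, t₀) hp₀)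
      simpa [hv2def] using h
    have hPcv : HasDerivWithinAt (fun s => Pc (τ₀, s))
        (D3 (τ₀, t₀) (0, 1) (1, 0) (1, 0)
          + ((n : ℝ) - 1) * (D2 (τ₀, t₀) (0, 1) (1, 0)) / τ₀
          - ((n : ℝ) - 1) * u (τ₀, t₀) / τ₀ ^ 2 - 0) (Set.Icc 0 T) t₀ := by
      simp only [hPcdef]
      exact ((hv2v.add ((hv1v.const_mul ((n : ℝ) - 1)).div_const τ₀)).sub
        ((hFv.const_mul ((n : ℝ) - 1)).div_const (τ₀ ^ 2))).sub
        (hasDerivWithinAt_const t₀ _ k)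
    have hQPeq : ∀ s ∈ Set.Icc (0 : ℝ) T, Q (F (τ₀, s)) * Pc (τ₀, s) = u (τ₀, s) :=
      fun s hs => (hkey (τ₀, s) (hmemS hτ₀I hs)).symm
    have hutd2 : HasDerivWithinAt (fun s => Q (F (τ₀, s)) * Pc (τ₀, s))
        (D2 (τ₀, t₀) (0, 1) (0, 1)) (Set.Icc 0 T) t₀ :=
      hutd.congr hQPeq (hQPeq t₀ ht₀I)
    have hprod := hQFv.mul hPcv
    have hueq : D2 (τ₀, t₀) (0, 1) (0, 1)
        = derivWithin Q (Set.Icc 1 a) (F (τ₀, t₀)) * u (τ₀, t₀) * Pc (τ₀, t₀)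
          + Q (F (τ₀, t₀)) * (D3 (τ₀, t₀) (0, 1) (1, 0) (1, 0)
            + ((n : ℝ) - 1) * (D2 (τ₀, t₀) (0, 1) (1, 0)) / τ₀
            - ((n : ℝ) - 1) * u (τ₀, t₀) / τ₀ ^ 2 - 0) := by
      rw [← hutd2.derivWithin hud]
      exact hprod.derivWithin hud
    -- final contradiction
    have hAb : |derivWithin Q (Set.Icc 1 a) (F (τ₀, t₀))| ≤ CQ := by
      have h := hCQ (F (τ₀, t₀)) (Set.Ioo_subset_Icc_self hψmem)
      rwa [Real.norm_eq_abs] at h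
    have hPb : |Pc (τ₀, t₀)| ≤ CP := by
      have h := hCP (τ₀, t₀) hp₀
      rwa [Real.norm_eq_abs] at h
    have hQ0 : 0 ≤ Q (F (τ₀, t₀)) := hQnonneg _ (hmapsP _ hp₀)
    have hsym1 : D2 (τ₀, t₀) (0, 1) (1, 0) = 0 := by
      rw [hsymF _ hp₀]
      exact hu1zero
    have hsym2 : D3 (τ₀, t₀) (0, 1) (1, 0) (1, 0) ≤ 0 := by
      have e1 : D3 (τ₀, t₀) (0, 1) (1, 0) (1, 0) = D3 (τ₀, t₀) (1, 0) (0, 1) (1, 0) := by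
        rw [hsymD1 _ hp₀ (0, 1) (1, 0)]
      have e2 : D3 (τ₀, t₀) (1, 0) (0, 1) (1, 0) = D3 (τ₀, t₀) (1, 0) (1, 0) (0, 1) :=
        hsymD2pt _ hp₀ (1, 0) (0, 1) (1, 0)
      rw [e1, e2]
      exact hu2le
    have hτ₀pos : (0 : ℝ) < τ₀ := lt_trans zero_lt_one hτ₀.1
    have hn1 : (1 : ℝ) ≤ (n : ℝ) - 1 := by
      have h2n : (2 : ℝ) ≤ (n : ℝ) := by exact_mod_cast hn
      linarith
    have h1 : derivWithin Q (Set.Icc 1 a) (F (τ₀, t₀)) * u (τ₀, t₀) * Pc (τ₀, t₀)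
        ≤ CQ * CP * u (τ₀, t₀) := by
      have hAP : derivWithin Q (Set.Icc 1 a) (F (τ₀, t₀)) * Pc (τ₀, t₀) ≤ CQ * CP := by
        refine le_trans (le_abs_self _) ?_
        rw [abs_mul]
        exact mul_le_mul hAb hPb (abs_nonneg _) hCQ0
      calc derivWithin Q (Set.Icc 1 a) (F (τ₀, t₀)) * u (τ₀, t₀) * Pc (τ₀, t₀)
          = (derivWithin Q (Set.Icc 1 a) (F (τ₀, t₀)) * Pc (τ₀, t₀)) * u (τ₀, t₀) := by ring
        _ ≤ (CQ * CP) * u (τ₀, t₀) := mul_le_mul_of_nonneg_right hAP hupos.le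
    have h2 : Q (F (τ₀, t₀)) * (D3 (τ₀, t₀) (0, 1) (1, 0) (1, 0)
        + ((n : ℝ) - 1) * (D2 (τ₀, t₀) (0, 1) (1, 0)) / τ₀
        - ((n : ℝ) - 1) * u (τ₀, t₀) / τ₀ ^ 2 - 0) ≤ 0 := by
      refine mul_nonpos_iff.mpr (Or.inl ⟨hQ0, ?_⟩)
      rw [hsym1]
      have hpos2 : 0 < ((n : ℝ) - 1) * u (τ₀, t₀) / τ₀ ^ 2 :=
        div_pos (mul_pos (lt_of_lt_of_le zero_lt_one hn1) hupos) (pow_pos hτ₀pos 2)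
      have : ((n : ℝ) - 1) * (0 : ℝ) / τ₀ = 0 := by ring
      rw [this]
      linarith [hsym2]
    have hfinal : D2 (τ₀, t₀) (0, 1) (0, 1) ≤ CQ * CP * u (τ₀, t₀) := by
      rw [hueq]
      calc derivWithin Q (Set.Icc 1 a) (F (τ₀, t₀)) * u (τ₀, t₀) * Pc (τ₀, t₀)
          + Q (F (τ₀, t₀)) * (D3 (τ₀, t₀) (0, 1) (1, 0) (1, 0)
            + ((n : ℝ) - 1) * (D2 (τ₀, t₀) (0, 1) (1, 0)) / τ₀
            - ((n : ℝ) - 1) * u (τ₀, t₀) / τ₀ ^ 2 - 0)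
          ≤ CQ * CP * u (τ₀, t₀) + 0 := add_le_add h1 h2
        _ = CQ * CP * u (τ₀, t₀) := add_zero _
    rw [hlamdef] at hlamu
    nlinarith
  -- conclude
  have concl1 : ∀ τ ∈ Set.Ioo (1 : ℝ) b, ∀ t ∈ Set.Ioc (0 : ℝ) T,
      Q (ψ τ t) * (deriv (deriv (fun x => ψ x t)) τ
        + ((n : ℝ) - 1) * deriv (fun x => ψ x t) τ / τ
        - ((n : ℝ) - 1) * ψ τ t / τ ^ 2 - k) ≤ 0 := by
    intro τ hτ t ht
    have htI : t ∈ Set.Icc (0 : ℝ) T := ⟨ht.1.le, ht.2⟩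
    rw [hPbridge τ hτ t htI, ← hDkey τ hτ t ht]
    exact key (τ, t) (hmemS (Set.Ioo_subset_Icc_self hτ) htI)
  refine ⟨concl1, ?_⟩
  intro τ hτ
  rcases eq_or_lt_of_le hτ.1 with h1 | h1
  · intro s hs t ht _
    simp only [← h1, hbd1 s hs, hbd1 t ht]
    exact le_rfl
  rcases eq_or_lt_of_le hτ.2 with h2 | h2
  · intro s hs t ht _
    simp only [h2, hbd2 s hs, hbd2 t ht]
    exact le_rfl
  have hτI : τ ∈ Set.Ioo (1 : ℝ) b := ⟨h1, h2⟩
  have hfc : ContinuousOn (fun t => ψ τ t) (Set.Icc 0 T) := by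
    have hcurve : ContinuousOn (fun s : ℝ => (τ, s)) (Set.Icc 0 T) :=
      (continuous_const.prodMk continuous_id).continuousOn
    exact hcontF.comp hcurve (fun s hs => hmemS (Set.Ioo_subset_Icc_self hτI) hs)
  apply antitoneOn_of_deriv_nonpos (convex_Icc 0 T) hfc
  · intro t ht
    rw [interior_Icc] at ht
    exact (hflow τ hτI t ⟨ht.1, ht.2.le⟩).differentiableAt.differentiableWithinAt
  · intro t ht
    rw [interior_Icc] at ht
    rw [(hflow τ hτI t ⟨ht.1, ht.2.le⟩).deriv]
    exact concl1 τ hτI t ⟨ht.1, ht.2.le⟩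
end
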